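/- arXiv:2004.04291 — 6 statements merged into one kernel-verified Lean document; each statement's English description precedes it below -/
import Mathlib

section
/- Let p and q be distinct primes such that p ≡ 1 (mod q) or p ≡ −1 (mod q), and (p,q) ≠ (2,3). Let (B,+,∘) be a skew left brace with |B| = p²q. Then (B,+) has a unique Sylow p-subgroup P, and P satisfies: λ_x(P) = P for every x ∈ B, P is a subgroup of (B,∘) (indeed the unique Sylow p-subgroup of (B,∘)), and P is a normal subgroup of both (B,+) and (B,∘). -/
/-- A skew (left) brace structure on an additive group `B`: a second group
operation `mul` (with identity `one` and inverse `inv`) satisfying the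
compatibility `a ∘ (b + c) = a ∘ b - a + a ∘ c`. -/
structure SkewBrace (B : Type*) [AddGroup B] where
  mul : B → B → B
  mul_assoc : ∀ a b c, mul (mul a b) c = mul a (mul b c)
  one : B
  one_mul : ∀ a, mul one a = a
  mul_one : ∀ a, mul a one = a
  inv : B → B
  inv_mul : ∀ a, mul (inv a) a = one
  compat : ∀ a b c, mul a (b + c) = mul a b + -a + mul a c

/-- The lambda map of a skew brace: `λ_a (b) = -a + a ∘ b`. -/
def SkewBrace.lam {B : Type*} [AddGroup B] (S : SkewBrace B) (a b : B) : B :=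
  -a + S.mul a b

lemma nt_contra {p q : ℕ} (hp : p.Prime) (hq : q.Prime)
    (hmod : (p : ZMod q) = 1 ∨ (p : ZMod q) = -1)
    (hne : ¬(p = 2 ∧ q = 3)) (h : p ∣ q - 1) : False := by
  have hq2 := hq.two_le
  have hp2 := hp.two_le
  have hple : p ≤ q - 1 := Nat.le_of_dvd (by omega) h
  haveI : NeZero q := ⟨by omega⟩
  rcases hmod with h1 | h1
  · have h2 : (p : ZMod q) = ((1 : ℕ) : ZMod q) := by simpa using h1
    have hmodeq : p ≡ 1 [MOD q] := (ZMod.natCast_eq_natCast_iff _ _ _).mp h2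
    have h3 : q ∣ p - 1 := (Nat.modEq_iff_dvd' (by omega)).mp hmodeq.symm
    have := Nat.le_of_dvd (by omega) h3
    omega
  · have h2 : ((p + 1 : ℕ) : ZMod q) = 0 := by push_cast; rw [h1]; ring
    have hdvd : q ∣ p + 1 := (ZMod.natCast_eq_zero_iff _ _).mp h2
    have hqle : q ≤ p + 1 := Nat.le_of_dvd (by omega) hdvd
    have hqeq : q = p + 1 := by omega
    by_cases hp2' : p = 2
    · exact hne ⟨hp2', by omega⟩
    · have hodd : Odd p := hp.odd_of_ne_two hp2'
      have heven : Even q := by rcases hodd with ⟨k, hk⟩; exact ⟨k + 1, by omega⟩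
      have : q = 2 := hq.even_iff.mp heven
      omega

lemma unique_card_subgroup {p q : ℕ} (hp : p.Prime) (hq : q.Prime) (hpq : p ≠ q)
    (hmod : (p : ZMod q) = 1 ∨ (p : ZMod q) = -1)
    (hne : ¬(p = 2 ∧ q = 3)) (G : Type*) [Group G] (hcard : Nat.card G = p ^ 2 * q) :
    ∃! P : Subgroup G, Nat.card P = p ^ 2 := by
  haveI : Fact p.Prime := ⟨hp⟩
  have hG : Nat.card G ≠ 0 := by
    rw [hcard]
    exact Nat.mul_ne_zero (pow_ne_zero 2 hp.pos.ne') hq.pos.ne'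
  haveI : Finite G := Nat.finite_of_card_ne_zero hG
  have hfact : (Nat.card G).factorization p = 2 := by
    rw [hcard, Nat.factorization_mul (pow_ne_zero 2 hp.pos.ne') hq.pos.ne', Finsupp.add_apply,
      hp.factorization_pow, Nat.factorization_eq_zero_of_not_dvd
        (fun hd => hpq ((Nat.prime_dvd_prime_iff_eq hp hq).mp hd))]
    simp
  obtain ⟨Q⟩ : Nonempty (Sylow p G) := inferInstance
  have hQcard : Nat.card Q = p ^ 2 := by rw [Q.card_eq_multiplicity, hfact]
  have hQindex : (Q : Subgroup G).index = q := by
    have h := (Q : Subgroup G).card_mul_index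
    rw [hcard] at h
    have h2 : Nat.card (Q : Subgroup G) = p ^ 2 := hQcard
    rw [h2] at h
    exact Nat.eq_of_mul_eq_mul_left (pow_pos hp.pos 2) h
  have hdvd : Nat.card (Sylow p G) ∣ q := hQindex ▸ Sylow.card_dvd_index Q
  have hmod1 : Nat.card (Sylow p G) ≡ 1 [MOD p] := card_sylow_modEq_one p G
  have hone : Nat.card (Sylow p G) = 1 := by
    rcases (Nat.Prime.eq_one_or_self_of_dvd hq _ hdvd) with h | h
    · exact h
    · exfalso
      have h2 : q ≡ 1 [MOD p] := h ▸ hmod1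
      have h3 : p ∣ q - 1 := (Nat.modEq_iff_dvd' hq.one_le).mp h2.symm
      exact nt_contra hp hq hmod hne h3
  haveI : Subsingleton (Sylow p G) := by
    rcases Nat.card_eq_one_iff_unique.mp hone with ⟨h, _⟩
    exact h
  refine ⟨Q, hQcard, ?_⟩
  intro H hH
  have hpg : IsPGroup p H := IsPGroup.of_card hH
  obtain ⟨R, hle⟩ := hpg.exists_le_sylow
  have hR : Nat.card R = p ^ 2 := by rw [R.card_eq_multiplicity, hfact]
  have hHR : H = (R : Subgroup G) := Subgroup.eq_of_le_of_card_ge hle (by rw [hH]; exact le_of_eq hR)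
  rw [hHR, Subsingleton.elim R Q]


lemma unique_card_addSubgroup {p q : ℕ} (hp : p.Prime) (hq : q.Prime) (hpq : p ≠ q)
    (hmod : (p : ZMod q) = 1 ∨ (p : ZMod q) = -1)
    (hne : ¬(p = 2 ∧ q = 3)) (B : Type*) [AddGroup B] (hcard : Nat.card B = p ^ 2 * q) :
    ∃! P : AddSubgroup B, Nat.card P = p ^ 2 := by
  obtain ⟨Q, hQ, hQu⟩ := unique_card_subgroup hp hq hpq hmod hne (Multiplicative B) hcard
  have key : ∀ P : AddSubgroup B, Nat.card (AddSubgroup.toSubgroup P) = Nat.card P :=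
    fun P => rfl
  refine ⟨AddSubgroup.toSubgroup.symm Q, ?_, ?_⟩
  · show Nat.card (AddSubgroup.toSubgroup.symm Q) = p ^ 2
    rw [← key (AddSubgroup.toSubgroup.symm Q)]
    have h2 : AddSubgroup.toSubgroup (AddSubgroup.toSubgroup.symm Q) = Q :=
      AddSubgroup.toSubgroup.apply_symm_apply Q
    rw [h2]
    exact hQ
  · intro P hP
    have h3 : AddSubgroup.toSubgroup P = Q := hQu _ (by show Nat.card (AddSubgroup.toSubgroup P) = p ^ 2; rw [key]; exact hP)
    rw [← h3]
    exact (AddSubgroup.toSubgroup.symm_apply_apply P).symm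

/-- Let `p, q` be distinct primes with `p ≡ ±1 (mod q)` and `(p,q) ≠ (2,3)`, and let
`B` be a skew brace of size `p²q`.  Then `(B,+)` has a unique Sylow `p`-subgroup `P`
(i.e. a unique subgroup of order `p²`), and `P` satisfies: `λ_x (P) = P` for all `x`,
`P` is a subgroup of `(B,∘)` (indeed the unique Sylow `p`-subgroup of `(B,∘)`), and
`P` is normal in both `(B,+)` and `(B,∘)`. -/
theorem stmt_0 (p q : ℕ) (hp : p.Prime) (hq : q.Prime) (hpq : p ≠ q)
    (hmod : (p : ZMod q) = 1 ∨ (p : ZMod q) = -1)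
    (hne : ¬(p = 2 ∧ q = 3))
    (B : Type*) [AddGroup B] (S : SkewBrace B) (hcard : Nat.card B = p ^ 2 * q) :
    (∃! P : AddSubgroup B, Nat.card P = p ^ 2) ∧
    ∀ P : AddSubgroup B, Nat.card P = p ^ 2 →
      (∀ x : B, S.lam x '' (P : Set B) = (P : Set B)) ∧
      (S.one ∈ P ∧ (∀ a ∈ P, ∀ b ∈ P, S.mul a b ∈ P) ∧ (∀ a ∈ P, S.inv a ∈ P)) ∧
      (∀ T : Set B, S.one ∈ T → (∀ a ∈ T, ∀ b ∈ T, S.mul a b ∈ T) →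
        (∀ a ∈ T, S.inv a ∈ T) → Nat.card T = p ^ 2 → T = (P : Set B)) ∧
      (∀ g : B, ∀ a ∈ P, g + a + -g ∈ P) ∧
      (∀ g : B, ∀ a ∈ P, S.mul (S.mul g a) (S.inv g) ∈ P) := by
  -- set up the circle group structure
  letI mulInst : Mul B := ⟨S.mul⟩
  letI oneInst : One B := ⟨S.one⟩
  letI invInst : Inv B := ⟨S.inv⟩
  letI grp : Group B := Group.ofLeftAxioms S.mul_assoc S.one_mul S.inv_mul
  have hmulDef : ∀ a b : B, S.mul a b = a * b := fun _ _ => rfl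
  have hinvDef : ∀ a : B, S.inv a = a⁻¹ := fun _ => rfl
  have honeDef : S.one = (1 : B) := rfl
  have hco : ∀ a b c : B, a * (b + c) = a * b + -a + a * c := S.compat
  -- 0 is the identity of ∘
  have hzero : ∀ a : B, a * (0 : B) = a := by
    intro a
    have h := hco a 0 0
    rw [add_zero] at h
    have h2 : a * 0 + 0 = a * 0 + (-a + a * 0) := by
      rw [add_zero, ← add_assoc]
      exact h
    have h3 := add_left_cancel h2
    have h4 : a + 0 = a + (-a + a * 0) := by rw [← h3]
    rw [add_zero, ← add_assoc, add_neg_cancel, zero_add] at h4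
    exact h4.symm
  have hone0 : (1 : B) = 0 := by
    have := hzero 1
    rw [one_mul] at this
    exact this.symm
  -- lambda facts
  have hlamDef : ∀ a b : B, S.lam a b = -a + a * b := fun _ _ => rfl
  have hlam_add : ∀ a b c : B, S.lam a (b + c) = S.lam a b + S.lam a c := by
    intro a b c
    simp only [hlamDef, hco, add_assoc]
  have hlam_inj : ∀ a : B, Function.Injective (S.lam a) := by
    intro a b c h
    simp only [hlamDef] at h
    exact mul_left_cancel (add_left_cancel h)
  have hlam_mem_iff : ∀ (a : B) (P : AddSubgroup B),
      (∀ x : B, S.lam x '' (P : Set B) = (P : Set B)) →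
      ∀ b : B, S.lam a b ∈ P → b ∈ P := by
    intro a P him b hb
    have hb' : S.lam a b ∈ (P : Set B) := hb
    rw [← him a] at hb'
    obtain ⟨c, hc, hcb⟩ := hb'
    have : c = b := hlam_inj a hcb
    rwa [← this]
  -- the additive lambda hom
  set lamHom : B → B →+ B := fun a => AddMonoidHom.mk' (S.lam a) (hlam_add a) with hlamHom
  -- uniqueness statements
  obtain ⟨P₀, hP₀, haddu⟩ := unique_card_addSubgroup hp hq hpq hmod hne B hcard
  obtain ⟨Q₀, hQ₀, hmulu⟩ := unique_card_subgroup hp hq hpq hmod hne B hcard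
  have uniqAdd : ∀ Q R : AddSubgroup B, Nat.card Q = p ^ 2 → Nat.card R = p ^ 2 → Q = R :=
    fun Q R hQ hR => (haddu Q hQ).trans (haddu R hR).symm
  have uniqMul : ∀ Q R : Subgroup B, Nat.card Q = p ^ 2 → Nat.card R = p ^ 2 → Q = R :=
    fun Q R hQ hR => (hmulu Q hQ).trans (hmulu R hR).symm
  -- cardinality of maps
  have cardMapAdd : ∀ (f : B →+ B), Function.Injective f → ∀ Q : AddSubgroup B,
      Nat.card (Q.map f) = Nat.card Q := by
    intro f hf Q
    have h1 : Nat.card (Q.map f) = Nat.card (f '' (Q : Set B)) := rfl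
    rw [h1, Nat.card_image_of_injective hf]
    rfl
  have cardMapMul : ∀ (f : B →* B), Function.Injective f → ∀ Q : Subgroup B,
      Nat.card (Q.map f) = Nat.card Q := by
    intro f hf Q
    have h1 : Nat.card (Q.map f) = Nat.card (f '' (Q : Set B)) := rfl
    rw [h1, Nat.card_image_of_injective hf]
    rfl
  refine ⟨⟨P₀, hP₀, haddu⟩, ?_⟩
  intro P hP
  -- lambda images
  have hlam_im : ∀ x : B, S.lam x '' (P : Set B) = (P : Set B) := by
    intro x
    have hinj : Function.Injective (lamHom x) := hlam_inj x
    have hcm : Nat.card (P.map (lamHom x)) = p ^ 2 := by rw [cardMapAdd _ hinj, hP]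
    have := uniqAdd _ _ hcm hP
    calc S.lam x '' (P : Set B) = ((P.map (lamHom x)) : Set B) := rfl
      _ = (P : Set B) := by rw [this]
  -- subgroup structure under ∘
  have honeP : S.one ∈ P := by
    rw [honeDef, hone0]
    exact P.zero_mem
  have hmulP : ∀ a ∈ P, ∀ b ∈ P, S.mul a b ∈ P := by
    intro a ha b hb
    have h1 : S.mul a b = a + S.lam a b := by
      rw [hlamDef, ← add_assoc, add_neg_cancel, zero_add, hmulDef]
    rw [h1]
    refine P.add_mem ha ?_
    show S.lam a b ∈ (P : Set B)
    rw [← hlam_im a]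
    exact ⟨b, hb, rfl⟩
  have hinvP : ∀ a ∈ P, S.inv a ∈ P := by
    intro a ha
    have h1 : S.lam a a⁻¹ = -a := by
      rw [hlamDef, mul_inv_cancel, hone0, add_zero]
    rw [hinvDef]
    exact hlam_mem_iff a P hlam_im a⁻¹ (h1 ▸ P.neg_mem ha)
  -- the multiplicative subgroup with carrier P
  set Pmul : Subgroup B :=
    { carrier := (P : Set B)
      mul_mem' := fun {a b} ha hb => hmulP a ha b hb
      one_mem' := by rw [← honeDef]; exact honeP
      inv_mem' := fun {a} ha => hinvP a ha } with hPmul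
  have hPmulCard : Nat.card Pmul = p ^ 2 := by exact hP
  refine ⟨hlam_im, ⟨honeP, hmulP, hinvP⟩, ?_, ?_, ?_⟩
  · -- uniqueness as ∘-subgroup
    intro T h1 h2 h3 hTcard
    set Tmul : Subgroup B :=
      { carrier := T
        mul_mem' := fun {a b} ha hb => h2 a ha b hb
        one_mem' := by rw [← honeDef]; exact h1
        inv_mem' := fun {a} ha => h3 a ha } with hTmul
    have hTc : Nat.card Tmul = p ^ 2 := by exact hTcard
    have heq : Tmul = Pmul := uniqMul _ _ hTc hPmulCard
    have := congrArg (fun (H : Subgroup B) => (H : Set B)) heq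
    exact this
  · -- additive normality
    intro g a ha
    set f : B →+ B := AddMonoidHom.mk' (fun x => g + x + -g) (by
      intro x y
      simp only [add_assoc]
      congr 1
      rw [← add_assoc (-g) g, neg_add_cancel, zero_add]) with hf
    have hfinj : Function.Injective f := by
      intro x y hxy
      simp only [hf, AddMonoidHom.mk'_apply] at hxy
      exact add_left_cancel (add_right_cancel hxy)
    have hcm : Nat.card (P.map f) = p ^ 2 := by rw [cardMapAdd _ hfinj, hP]
    have heq := uniqAdd _ _ hcm hP
    rw [← heq]
    exact ⟨a, ha, rfl⟩
  · -- multiplicative normality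
    intro g a ha
    set f : B →* B := MonoidHom.mk' (fun x => g * x * g⁻¹) (by intro x y; group) with hf
    have hfinj : Function.Injective f := by
      intro x y hxy
      simp only [hf, MonoidHom.mk'_apply] at hxy
      exact mul_left_cancel (mul_right_cancel hxy)
    have hcm : Nat.card (Pmul.map f) = p ^ 2 := by rw [cardMapMul _ hfinj, hPmulCard]
    have heq := uniqMul _ _ hcm hPmulCard
    have hmem : g * a * g⁻¹ ∈ Pmul := by
      rw [← heq]
      exact ⟨a, show a ∈ Pmul from ha, rfl⟩
    exact hmem
end

section
/- Let p and q be distinct primes with p ≡ 1 (mod q), and let A be the cyclic group of order p²q. Then there is no regular subgroup G of Hol(A) such that the image π₂(G) has order pq. -/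
/-!
Identify `Aut(ℤ/p²q)` with `(ℤ/p²q)ˣ`, so that `Hol(A)` acts by affine maps `x ↦ b + u x`.
For regular `G` with `|π₂(G)| = pq`, the kernel `G ∩ ker π₂` has order `p`. Take `g : x ↦ b + u x`
in `G` with `u` of order `q`, and `k : x ↦ c + v x` in `G` of `p`-power order with `v ≠ 1`.
Then `v ≡ 1 (mod pq)` (because `q < p`), `u ≢ 1 (mod p)`, and `q ∣ c` (from `k ^ p² = 1`).
The commutator `[g, k]` lies in the kernel, so it is the translation by `(u - 1) c - (v - 1) b`
and is killed by `p`; as `u - 1` is invertible mod `p`, this gives `p c = 0`. The elements of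
`ℤ/p²q` killed by `p` form a cyclic group of order `p`, generated by `v - 1 ≠ 0`, so
`c ∈ ℤ (v - 1)` and `k` has a fixed point, contradicting regularity.
-/

/-- The holomorph `Hol(A) = A ⋊ Aut(A)` of a group `A`. -/
abbrev Hol (A : Type*) [Group A] :=
  SemidirectProduct A (MulAut A) (MonoidHom.id (MulAut A))

/-- The natural action of an element `(a, f)` of `Hol(A)` on `A`: `(a, f) · x = a * f x`. -/
def holSmul {A : Type*} [Group A] (g : Hol A) (x : A) : A :=
  g.left * g.right x

/-- A subgroup `G ≤ Hol(A)` is regular if for all `x y : A` there is exactly one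
`g ∈ G` with `g · x = y`. -/
def IsRegularSubgroup {A : Type*} [Group A] (G : Subgroup (Hol A)) : Prop :=
  ∀ x y : A, ∃! g : G, holSmul (g : Hol A) x = y

open scoped commutatorElement

namespace IsRegularSubgroup

variable {A : Type*} [Group A] {G : Subgroup (Hol A)}

theorem card_eq (hG : IsRegularSubgroup G) : Nat.card G = Nat.card A := by
  refine Nat.card_eq_of_bijective (fun g : G => holSmul (g : Hol A) 1)
    ⟨fun g₁ g₂ h => (hG 1 _).unique h rfl, fun y => ?_⟩
  obtain ⟨g, hg, -⟩ := hG 1 y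
  exact ⟨g, hg⟩

theorem eq_one_of_holSmul_eq_self (hG : IsRegularSubgroup G) (g : G) {x : A}
    (hx : holSmul (g : Hol A) x = x) : g = 1 :=
  (hG x x).unique hx (by simp [holSmul])

end IsRegularSubgroup

theorem MonoidHom.exists_pow_eq_one_map_ne_one {G H : Type*} [Group G] [Group H] [Finite G]
    (f : G →* H) {p a b : ℕ} [Fact p.Prime] (hG : Nat.card G = a * b)
    (hp : p ∣ Nat.card f.range) (hpb : ¬ p ∣ b) : ∃ k : G, k ^ a = 1 ∧ f k ≠ 1 := by
  have : Finite f.range := Finite.of_surjective _ f.rangeRestrict_surjective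
  obtain ⟨⟨w, g, rfl⟩, hw⟩ := exists_prime_orderOf_dvd_card' p hp
  refine ⟨g ^ b, by rw [← pow_mul, mul_comm, ← hG, pow_card_eq_one'], fun h => hpb ?_⟩
  rw [← hw, orderOf_dvd_iff_pow_eq_one]
  exact Subtype.ext (by simpa using h)

theorem MonoidHom.exists_commutatorElement_pow_eq_one {G M : Type*} [Group G] [CommGroup M]
    [Finite G] (f : G →* M) {p q : ℕ} [Fact p.Prime] [Fact q.Prime] (hpq : p ≠ q)
    (hG : Nat.card G = p ^ 2 * q) (hf : Nat.card f.range = p * q) :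
    ∃ g k : G, g ^ q = 1 ∧ f g ≠ 1 ∧ k ^ p ^ 2 = 1 ∧ f k ≠ 1 ∧ ⁅g, k⁆ ^ p = 1 := by
  have hp : p.Prime := Fact.out
  have hq : q.Prime := Fact.out
  have hker : Nat.card f.ker = p := by
    have := f.ker.card_mul_index
    rw [Subgroup.index_ker, hf, hG] at this
    exact Nat.eq_of_mul_eq_mul_right (Nat.mul_pos hp.pos hq.pos) (by rw [this]; ring)
  obtain ⟨g, hgq, hg1⟩ := f.exists_pow_eq_one_map_ne_one (p := q) (hG.trans (mul_comm _ _))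
    (hf ▸ dvd_mul_left q p) fun h =>
      hpq ((Nat.prime_dvd_prime_iff_eq hq hp).mp (hq.dvd_of_dvd_pow h)).symm
  obtain ⟨k, hkp, hk1⟩ := f.exists_pow_eq_one_map_ne_one (p := p) hG
    (hf ▸ dvd_mul_right p q) fun h => hpq ((Nat.prime_dvd_prime_iff_eq hp hq).mp h)
  have hmem : ⁅g, k⁆ ∈ f.ker := by
    rw [MonoidHom.mem_ker, map_commutatorElement, commutatorElement_eq_one_iff_commute]
    exact Commute.all _ _
  have hgk := f.ker.orderOf_dvd_natCard hmem
  rw [hker, orderOf_dvd_iff_pow_eq_one] at hgk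
  exact ⟨g, k, hgq, hg1, hkp, hk1, hgk⟩

theorem IsAddCyclic.mem_zmultiples_of_nsmul_eq_zero {G : Type*} [AddCommGroup G]
    [IsAddCyclic G] [Finite G] {p : ℕ} [Fact p.Prime] (hp : p ∣ Nat.card G) {x y : G}
    (hx : p • x = 0) (hy : p • y = 0) (hy0 : y ≠ 0) : x ∈ AddSubgroup.zmultiples y := by
  have hK : Nat.card (nsmulAddMonoidHom p : G →+ G).ker = p := by
    rw [IsAddCyclic.card_nsmulAddMonoidHom_ker, Nat.gcd_eq_right hp]
  obtain ⟨k, hk⟩ := AddSubgroup.mem_zmultiples_iff.mp <|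
    mem_zmultiples_of_prime_card hK (g := ⟨y, hy⟩) (g' := ⟨x, hx⟩) (fun h => hy0 congr($h.1))
  exact ⟨k, congr($hk.1)⟩

theorem one_add_pow_of_sq_eq_zero {R : Type*} [CommRing R] {x : R} (hx : x ^ 2 = 0) (n : ℕ) :
    (1 + x) ^ n = 1 + n * x := by
  induction n with
  | zero => simp
  | succ n ih =>
    rw [pow_succ, ih]
    push_cast
    linear_combination (n : R) * hx

namespace ZMod

theorem castHom_eq_zero_iff_dvd {m n : ℕ} (h : m ∣ n) (x : ZMod n) :
    castHom h (ZMod m) x = 0 ↔ (m : ZMod n) ∣ x := by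
  constructor
  · intro hx
    obtain ⟨k, rfl⟩ := intCast_surjective x
    rw [map_intCast, intCast_zmod_eq_zero_iff_dvd] at hx
    obtain ⟨j, rfl⟩ := hx
    exact ⟨j, by push_cast; ring⟩
  · rintro ⟨y, rfl⟩
    rw [map_mul, map_natCast, natCast_self, zero_mul]

theorem natCast_mul_dvd_of_castHom_eq_zero {m n N : ℕ} (hm : m ∣ N) (hn : n ∣ N)
    (hmn : m.Coprime n) {x : ZMod N} (hxm : castHom hm (ZMod m) x = 0)
    (hxn : castHom hn (ZMod n) x = 0) : ((m * n : ℕ) : ZMod N) ∣ x := by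
  rw [castHom_eq_zero_iff_dvd] at hxm hxn
  exact_mod_cast hmn.cast.mul_dvd hxm hxn

theorem castHom_eq_one_of_pow_eq_one_of_coprime {q N n : ℕ} [Fact q.Prime] (hq : q ∣ N)
    (hn : n.Coprime (q - 1)) {v : (ZMod N)ˣ} (hv : v ^ n = 1) : castHom hq (ZMod q) v = 1 := by
  refine (pow_eq_one_iff_of_coprime hn).mp
    ⟨?_, pow_card_sub_one_eq_one (v.isUnit.map _).ne_zero⟩
  rw [← map_pow, ← Units.val_pow_eq_pow_val, hv, Units.val_one, map_one]

theorem natCast_mul_dvd_sub_one_of_pow_eq_one {p q N n : ℕ} [Fact p.Prime] [Fact q.Prime]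
    (hp : p ∣ N) (hq : q ∣ N) (hqp : q < p) {v : (ZMod N)ˣ} (hv : v ^ p ^ n = 1) :
    ((p * q : ℕ) : ZMod N) ∣ v - 1 := by
  have hq2 := (Fact.out : q.Prime).two_le
  have hvq : castHom hq (ZMod q) v = 1 :=
    castHom_eq_one_of_pow_eq_one_of_coprime hq
      ((Nat.coprime_of_lt_prime (n := q - 1) (p := p) (by omega) (by omega) Fact.out).pow_left n)
      hv
  have hvp : castHom hp (ZMod p) v = 1 := by
    rw [← pow_card_pow (n := n) (castHom hp (ZMod p) v), ← map_pow, ← Units.val_pow_eq_pow_val,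
      hv, Units.val_one, map_one]
  refine natCast_mul_dvd_of_castHom_eq_zero hp hq ?_ ?_ ?_
  · exact (Nat.coprime_primes Fact.out Fact.out).mpr hqp.ne'
  · rw [map_sub, hvp, map_one, sub_self]
  · rw [map_sub, hvq, map_one, sub_self]

theorem castHom_ne_one_of_pow_eq_one {p q : ℕ} [Fact q.Prime] (hpq : p.Coprime q)
    {u : ZMod (p ^ 2 * q)} (hu : u ^ q = 1) (hu1 : u ≠ 1) :
    castHom (dvd_mul_of_dvd_left (dvd_pow_self p two_ne_zero) q) (ZMod p) u ≠ 1 := by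
  intro hup
  have huq : castHom (dvd_mul_left q (p ^ 2)) (ZMod q) u = 1 := by
    rw [← pow_card (castHom _ (ZMod q) u), ← map_pow, hu, map_one]
  obtain ⟨y, hy⟩ := natCast_mul_dvd_of_castHom_eq_zero _ _ hpq (x := u - 1)
    (by rw [map_sub, hup, map_one, sub_self]) (by rw [map_sub, huq, map_one, sub_self])
  have hN : (p : ZMod (p ^ 2 * q)) ^ 2 * q = 0 := by exact_mod_cast natCast_self (p ^ 2 * q)
  have hsq : (u - 1) ^ 2 = 0 := by rw [hy]; push_cast; linear_combination q * y ^ 2 * hN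
  have hq0 : (q : ZMod (p ^ 2 * q)) * (u - 1) = 0 := by
    have := one_add_pow_of_sq_eq_zero hsq q
    rw [add_sub_cancel, hu] at this
    linear_combination -this
  have hp0 : (p : ZMod (p ^ 2 * q)) * (u - 1) = 0 := by
    rw [hy]; push_cast; linear_combination y * hN
  obtain ⟨a, b, hab⟩ := (hpq.cast : IsCoprime (p : ZMod (p ^ 2 * q)) q)
  exact hu1 (sub_eq_zero.mp (by linear_combination a * hp0 + b * hq0 - (u - 1) * hab))

theorem natCast_mul_eq_zero_of_castHom_ne_zero {p N : ℕ} [Fact p.Prime] (hp : p ∣ N)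
    {x c : ZMod N} (hx : castHom hp (ZMod p) x ≠ 0) (hxc : (p : ZMod N) * (x * c) = 0)
    (hc : (p : ZMod N) ^ 2 * c = 0) : (p : ZMod N) * c = 0 := by
  obtain ⟨x', hx'⟩ := castHom_surjective hp (castHom hp (ZMod p) x)⁻¹
  obtain ⟨j, hj⟩ : (p : ZMod N) ∣ x * x' - 1 := by
    rw [← castHom_eq_zero_iff_dvd hp, map_sub, map_mul, hx', mul_inv_cancel₀ hx, map_one,
      sub_self]
  linear_combination x' * hxc - j * hc - p * c * hj

theorem exists_add_mul_eq_self {p q : ℕ} [Fact p.Prime] [Fact q.Prime] (hpq : p.Coprime q)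
    {u v b c : ZMod (p ^ 2 * q)} (hu : u ^ q = 1) (hu1 : u ≠ 1)
    (hv : ((p * q : ℕ) : ZMod (p ^ 2 * q)) ∣ v - 1) (hv1 : v ≠ 1)
    (hc : (q : ZMod (p ^ 2 * q)) ∣ c)
    (hτ : (p : ZMod (p ^ 2 * q)) * ((u - 1) * c - (v - 1) * b) = 0) :
    ∃ ξ, c + v * ξ = ξ := by
  have hdp : p ∣ p ^ 2 * q := dvd_mul_of_dvd_left (dvd_pow_self p two_ne_zero) q
  have hN : (p : ZMod (p ^ 2 * q)) ^ 2 * q = 0 := by exact_mod_cast natCast_self (p ^ 2 * q)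
  obtain ⟨y, hy⟩ := hv
  obtain ⟨c', rfl⟩ := hc
  have hup : castHom hdp (ZMod p) (u - 1) ≠ 0 := by
    rw [map_sub, map_one, sub_ne_zero]
    exact castHom_ne_one_of_pow_eq_one hpq hu hu1
  have hpc : (p : ZMod (p ^ 2 * q)) * (q * c') = 0 :=
    natCast_mul_eq_zero_of_castHom_ne_zero hdp hup
      (by rw [hy] at hτ; push_cast at hτ; linear_combination hτ + y * b * hN)
      (by linear_combination c' * hN)
  obtain ⟨n, hn⟩ := IsAddCyclic.mem_zmultiples_of_nsmul_eq_zero (p := p)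
    (by rw [Nat.card_zmod]; exact hdp) (x := q * c') (by simpa using hpc)
    (by rw [nsmul_eq_mul, hy]; push_cast; linear_combination y * hN) (sub_ne_zero.mpr hv1)
  simp only [zsmul_eq_mul] at hn
  exact ⟨-n, by linear_combination -hn⟩

end ZMod

noncomputable def mulAutZModEquivUnits (N : ℕ) :
    MulAut (Multiplicative (ZMod N)) ≃* (ZMod N)ˣ :=
  (MulAutMultiplicative (ZMod N)).trans (ZMod.AddAutEquivUnits N).toMultiplicative

theorem toAdd_mulAut_apply {N : ℕ} (F : MulAut (Multiplicative (ZMod N)))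
    (x : Multiplicative (ZMod N)) : (F x).toAdd = mulAutZModEquivUnits N F * x.toAdd := by
  obtain ⟨u, rfl⟩ := (mulAutZModEquivUnits N).symm.surjective F
  rw [MulEquiv.apply_symm_apply]
  rfl

namespace Hol

variable {N : ℕ}

noncomputable def scale : Hol (Multiplicative (ZMod N)) →* (ZMod N)ˣ :=
  (mulAutZModEquivUnits N).toMonoidHom.comp SemidirectProduct.rightHom

def translation (g : Hol (Multiplicative (ZMod N))) : ZMod N := g.left.toAdd

theorem card_range_scale_comp_subtype (G : Subgroup (Hol (Multiplicative (ZMod N)))) :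
    Nat.card (scale.comp G.subtype).range = Nat.card (G.map SemidirectProduct.rightHom) := by
  rw [scale, MonoidHom.comp_assoc, MonoidHom.range_comp, MonoidHom.range_comp,
    Subgroup.range_subtype]
  exact Subgroup.card_map_of_injective (mulAutZModEquivUnits N).injective

variable (g h : Hol (Multiplicative (ZMod N)))

theorem toAdd_holSmul (x : Multiplicative (ZMod N)) :
    (holSmul g x).toAdd = translation g + scale g * x.toAdd :=
  congrArg (translation g + ·) (toAdd_mulAut_apply g.right x)

theorem translation_mul : translation (g * h) = translation g + scale g * translation h :=
  congrArg (translation g + ·) (toAdd_mulAut_apply g.right h.left)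

theorem translation_one : translation (1 : Hol (Multiplicative (ZMod N))) = 0 := rfl

theorem translation_inv : translation g⁻¹ = -(scale g⁻¹ * translation g) := by
  have := translation_mul g⁻¹ g
  rw [inv_mul_cancel, translation_one] at this
  linear_combination -this

theorem scale_commutatorElement : scale ⁅g, h⁆ = 1 := by
  rw [map_commutatorElement, commutatorElement_eq_one_iff_commute]
  exact Commute.all _ _

theorem translation_commutatorElement :
    translation ⁅g, h⁆ = (scale g - 1) * translation h - (scale h - 1) * translation g := by
  have hg : (scale g⁻¹ : ZMod N) * scale g = 1 := by
    rw [← Units.val_mul, ← map_mul, inv_mul_cancel, map_one, Units.val_one]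
  have hh : (scale h⁻¹ : ZMod N) * scale h = 1 := by
    rw [← Units.val_mul, ← map_mul, inv_mul_cancel, map_one, Units.val_one]
  simp only [commutatorElement_def, translation_mul, translation_inv, map_mul, Units.val_mul]
  linear_combination (-(scale h * translation g) - translation h) * hg -
    scale g * scale g⁻¹ * translation h * hh

theorem map_translation_pow {R : Type*} [CommRing R] (ψ : ZMod N →+* R)
    (hg : ψ (scale g) = 1) (n : ℕ) : ψ (translation (g ^ n)) = n * ψ (translation g) := by
  induction n with
  | zero => simp [translation_one]
  | succ n ih =>
    rw [pow_succ, translation_mul, map_add, map_mul, ih, map_pow, Units.val_pow_eq_pow_val,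
      map_pow, hg]
    push_cast
    ring

theorem exists_holSmul_eq_self {p q : ℕ} [Fact p.Prime] [Fact q.Prime] (hqp : q < p)
    {g k : Hol (Multiplicative (ZMod (p ^ 2 * q)))} (hg : scale g ^ q = 1) (hg1 : scale g ≠ 1)
    (hk : k ^ p ^ 2 = 1) (hk1 : scale k ≠ 1) (hgk : ⁅g, k⁆ ^ p = 1) :
    ∃ x, holSmul k x = x := by
  have hdq : q ∣ p ^ 2 * q := dvd_mul_left q (p ^ 2)
  have hv := ZMod.natCast_mul_dvd_sub_one_of_pow_eq_one
    (dvd_mul_of_dvd_left (dvd_pow_self p two_ne_zero) q) hdq hqp (v := scale k)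
    (by rw [← map_pow, hk, map_one])
  have hvq : ZMod.castHom hdq (ZMod q) (scale k) = 1 := by
    rw [← sub_eq_zero, ← map_one (ZMod.castHom hdq (ZMod q)), ← map_sub,
      ZMod.castHom_eq_zero_iff_dvd]
    exact (Nat.cast_dvd_cast (dvd_mul_left q p)).trans (by exact_mod_cast hv)
  have hc : (q : ZMod (p ^ 2 * q)) ∣ translation k := by
    have hp0 : (p : ZMod q) ^ 2 ≠ 0 := pow_ne_zero 2 <| (ZMod.natCast_eq_zero_iff p q).not.mpr
      ((Nat.prime_dvd_prime_iff_eq Fact.out Fact.out).not.mpr hqp.ne)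
    have := map_translation_pow k (ZMod.castHom hdq (ZMod q)) hvq (p ^ 2)
    rw [hk, translation_one, map_zero, eq_comm, Nat.cast_pow] at this
    rw [← ZMod.castHom_eq_zero_iff_dvd hdq]
    exact (mul_eq_zero.mp this).resolve_left hp0
  have hτ := map_translation_pow ⁅g, k⁆ (RingHom.id _)
    (by rw [scale_commutatorElement, Units.val_one, map_one]) p
  rw [hgk, translation_one, translation_commutatorElement, RingHom.id_apply,
    RingHom.id_apply] at hτ
  obtain ⟨ξ, hξ⟩ := ZMod.exists_add_mul_eq_self
    ((Nat.coprime_primes Fact.out Fact.out).mpr hqp.ne')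
    (by rw [← Units.val_pow_eq_pow_val, hg, Units.val_one]) (mt Units.val_eq_one.mp hg1) hv
    (mt Units.val_eq_one.mp hk1) hc hτ.symm
  exact ⟨.ofAdd ξ, Multiplicative.toAdd.injective (by rw [toAdd_holSmul, toAdd_ofAdd, hξ])⟩

end Hol

theorem stmt_4_general (p q : ℕ) (hp : p.Prime) (hq : q.Prime)
    (hmod : p ≡ 1 [MOD q]) :
    ¬ ∃ G : Subgroup (Hol (Multiplicative (ZMod (p ^ 2 * q)))),
        IsRegularSubgroup G ∧
        Nat.card (G.map SemidirectProduct.rightHom) = p * q := by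
  rintro ⟨G, hreg, hcard⟩
  have := Fact.mk hp
  have := Fact.mk hq
  have hqp : q < p := Nat.lt_of_le_sub_one hp.pos <|
    Nat.le_of_dvd (Nat.sub_pos_of_lt hp.one_lt) ((Nat.modEq_iff_dvd' hp.one_lt.le).mp hmod.symm)
  have hG : Nat.card G = p ^ 2 * q := by
    rw [hreg.card_eq, Nat.card_congr Multiplicative.toAdd, Nat.card_zmod]
  have : Finite G := Nat.finite_of_card_ne_zero (by rw [hG]; exact NeZero.ne _)
  obtain ⟨g, k, hgq, hg1, hkp, hk1, hgk⟩ :=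
    (Hol.scale.comp G.subtype).exists_commutatorElement_pow_eq_one hqp.ne' hG
      ((Hol.card_range_scale_comp_subtype G).trans hcard)
  obtain ⟨x, hx⟩ := Hol.exists_holSmul_eq_self hqp (g := g) (k := k)
    (by simpa using congrArg (Hol.scale.comp G.subtype) hgq) hg1
    (by simpa using congrArg G.subtype hkp) hk1
    (show ⁅G.subtype g, G.subtype k⁆ ^ p = 1 by
      rw [← map_commutatorElement, ← map_pow, hgk, map_one])
  exact hk1 (by rw [hreg.eq_one_of_holSmul_eq_self k hx, map_one])

/-- Let `p, q` be distinct primes with `p ≡ 1 (mod q)` and let `A` be the cyclic group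
of order `p²q`.  Then there is no regular subgroup `G ≤ Hol(A)` whose image under the
projection `π₂ : Hol(A) → Aut(A)` has order `pq`. -/
theorem stmt_4 (p q : ℕ) (hp : p.Prime) (hq : q.Prime) (hpq : p ≠ q)
    (hmod : p ≡ 1 [MOD q]) :
    ¬ ∃ G : Subgroup (Hol (Multiplicative (ZMod (p ^ 2 * q)))),
        IsRegularSubgroup G ∧
        Nat.card (G.map SemidirectProduct.rightHom) = p * q :=
  stmt_4_general p q hp hq hmod
end

section
/- Let p and q be distinct primes with q ≢ 1 (mod p). On the set B = ℤ/p² × ℤ/q with componentwise addition +, define (n,m) ∘ (s,r) = (n + s + p·n·s, m + r). Then (B,∘) is a group, (B,+,∘) is a left brace, the kernel of λ has order pq, and (B,∘) is cyclic of order p²q. -/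
/-- `f` is a left-brace multiplication on the abelian group `B`: `(B, f)` is a group
with identity `0` and `f a (b + c) = f a b - a + f a c` holds. -/
def IsLeftBrace {B : Type*} [AddCommGroup B] (f : B → B → B) : Prop :=
  (∀ a b c, f (f a b) c = f a (f b c)) ∧
  (∀ a, f 0 a = a) ∧
  (∀ a, f a 0 = a) ∧
  (∀ a, ∃ a', f a' a = 0) ∧
  (∀ a b c, f a (b + c) = f a b - a + f a c)

/-- The kernel of `λ`: the set of `a` with `λ_a = id`, i.e. `a ∘ b = a + b` for all `b`. -/
def kerLambda {B : Type*} [AddCommGroup B] (f : B → B → B) : Set B :=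
  {a | ∀ b, f a b = a + b}

/-- The circle operation `(n, m) ∘ (s, r) = (n + s + p n s, m + r)` on `ℤ/p² × ℤ/q`. -/
def circ5 (p q : ℕ) : ZMod (p ^ 2) × ZMod q → ZMod (p ^ 2) × ZMod q → ZMod (p ^ 2) × ZMod q :=
  fun x y => (x.1 + y.1 + (p : ZMod (p ^ 2)) * x.1 * y.1, x.2 + y.2)

/-! Auxiliary lemmas. -/

lemma aux_brace (p q : ℕ) (hP : (p : ZMod (p^2)) * (p : ZMod (p^2)) = 0) :
    IsLeftBrace (circ5 p q) := by
  refine ⟨?_, ?_, ?_, ?_, ?_⟩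
  · intro a b c
    simp only [circ5, Prod.mk.injEq]
    exact ⟨by ring, by ring⟩
  · intro a
    simp only [circ5, Prod.fst_zero, Prod.snd_zero]
    rw [Prod.ext_iff]
    exact ⟨by simp only; ring, by simp only; ring⟩
  · intro a
    simp only [circ5, Prod.fst_zero, Prod.snd_zero]
    rw [Prod.ext_iff]
    exact ⟨by simp only; ring, by simp only; ring⟩
  · intro a
    refine ⟨(-a.1 + (p : ZMod (p^2)) * a.1 * a.1, -a.2), ?_⟩
    simp only [circ5, Prod.ext_iff, Prod.fst_zero, Prod.snd_zero]
    exact ⟨by linear_combination (a.1 * a.1 * a.1) * hP, by ring⟩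
  · intro a b c
    simp only [circ5, Prod.ext_iff, Prod.fst_add, Prod.snd_add, Prod.fst_sub, Prod.snd_sub]
    exact ⟨by ring, by ring⟩

lemma aux_key (p : ℕ) (hp : p.Prime) [NeZero (p^2)] :
    ∀ x : ZMod (p^2), (p : ZMod (p^2)) * x = 0 → p ∣ x.val := by
  intro x hx
  have h1 : ((p * x.val : ℕ) : ZMod (p^2)) = 0 := by
    push_cast
    rw [ZMod.natCast_rightInverse x]
    exact hx
  have h2 : p^2 ∣ p * x.val := (ZMod.natCast_eq_zero_iff _ _).mp h1
  obtain ⟨k, hk⟩ := h2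
  refine ⟨k, Nat.eq_of_mul_eq_mul_left hp.pos ?_⟩
  rw [hk]; ring

def aux_e (p : ℕ) (hp : p.Prime) [NeZero (p^2)] [NeZero p] :
    {x : ZMod (p^2) // (p : ZMod (p^2)) * x = 0} ≃ ZMod p where
  toFun x := ((x.1.val / p : ℕ) : ZMod p)
  invFun k := ⟨((p * k.val : ℕ) : ZMod (p^2)), by
    rw [show ((p * k.val : ℕ) : ZMod (p^2)) = (p : ZMod (p^2)) * (k.val : ZMod (p^2)) by push_cast; ring,
      ← mul_assoc, ← Nat.cast_mul, ← pow_two, ZMod.natCast_self, zero_mul]⟩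
  left_inv := by
    intro x
    have hdvd := aux_key p hp x.1 x.2
    have hlt : x.1.val / p < p := by
      apply Nat.div_lt_of_lt_mul
      rw [← pow_two]
      exact ZMod.val_lt x.1
    apply Subtype.ext
    simp only
    rw [ZMod.val_cast_of_lt hlt, Nat.mul_div_cancel' hdvd, ZMod.natCast_rightInverse x.1]
  right_inv := by
    intro k
    have hlt : p * k.val < p^2 := by
      rw [pow_two]
      exact (Nat.mul_lt_mul_left hp.pos).mpr (ZMod.val_lt k)
    simp only
    rw [ZMod.val_cast_of_lt hlt, Nat.mul_div_cancel_left _ hp.pos, ZMod.natCast_rightInverse k]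

lemma aux_card (p : ℕ) (hp : p.Prime) [NeZero (p^2)] [NeZero p] :
    Nat.card {x : ZMod (p^2) // (p : ZMod (p^2)) * x = 0} = p := by
  rw [Nat.card_congr (aux_e p hp), Nat.card_zmod]

def auxProd {A B : Type*} (Q : A → Prop) : {a : A × B // Q a.1} ≃ {x : A // Q x} × B where
  toFun a := (⟨a.1.1, a.2⟩, a.1.2)
  invFun x := ⟨(x.1.1, x.2), x.1.2⟩
  left_inv a := rfl
  right_inv x := rfl

lemma aux_ker (p q : ℕ) :
    kerLambda (circ5 p q) = {a : ZMod (p^2) × ZMod q | (p : ZMod (p^2)) * a.1 = 0} := by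
  ext a
  simp only [kerLambda, Set.mem_setOf_eq]
  constructor
  · intro h
    have h1 := congrArg Prod.fst (h (1, 0))
    simp only [circ5, Prod.fst_add] at h1
    linear_combination h1
  · intro h b
    rw [show circ5 p q a b = (a.1 + b.1 + (p : ZMod (p^2)) * a.1 * b.1, a.2 + b.2) from rfl,
      Prod.ext_iff]
    refine ⟨?_, rfl⟩
    simp only [Prod.fst_add]
    linear_combination b.1 * h

def auxPsi (p : ℕ) (c : ZMod (p^2)) (hP : (p : ZMod (p^2)) * (p : ZMod (p^2)) = 0) :
    ZMod (p^2) ≃ ZMod (p^2) where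
  toFun n := n - (p : ZMod (p^2)) * c * n^2
  invFun n := n + (p : ZMod (p^2)) * c * n^2
  left_inv n := by
    simp only
    linear_combination (-2*c^2*n^3 + (p : ZMod (p^2))*c^3*n^4) * hP
  right_inv n := by
    simp only
    linear_combination (-2*c^2*n^3 - (p : ZMod (p^2))*c^3*n^4) * hP

lemma auxPsiHom (p : ℕ) (c : ZMod (p^2)) (hP : (p : ZMod (p^2)) * (p : ZMod (p^2)) = 0)
    (hc : 2 * c = 1) (n s : ZMod (p^2)) :
    auxPsi p c hP (n + s + (p : ZMod (p^2)) * n * s) = auxPsi p c hP n + auxPsi p c hP s := by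
  simp only [auxPsi, Equiv.coe_fn_mk]
  linear_combination (-((p : ZMod (p^2))*n*s)) * hc +
    (-2*c*n*s*(n+s) - (p : ZMod (p^2))*c*n^2*s^2) * hP

/-- Let `p, q` be distinct primes with `q ≢ 1 (mod p)`.  On `B = ℤ/p² × ℤ/q` with
componentwise addition, `(n,m) ∘ (s,r) = (n + s + p n s, m + r)` makes `(B,∘)` a group,
`(B,+,∘)` a left brace with `|ker λ| = pq`, and `(B,∘)` is cyclic of order `p²q`. -/
theorem stmt_5 (p q : ℕ) (hp : p.Prime) (hq : q.Prime) (hpq : p ≠ q)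
    (hmod : ¬ q ≡ 1 [MOD p]) :
    IsLeftBrace (circ5 p q) ∧
    Nat.card ↥(kerLambda (circ5 p q)) = p * q ∧
    ∃ e : ZMod (p ^ 2) × ZMod q ≃ ZMod (p ^ 2 * q),
      ∀ a b, e (circ5 p q a b) = e a + e b := by
  haveI : NeZero (p^2) := ⟨(pow_pos hp.pos 2).ne'⟩
  haveI : NeZero p := ⟨hp.ne_zero⟩
  haveI : NeZero q := ⟨hq.ne_zero⟩
  have hP : (p : ZMod (p^2)) * (p : ZMod (p^2)) = 0 := by
    rw [← Nat.cast_mul, ← pow_two, ZMod.natCast_self]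
  refine ⟨aux_brace p q hP, ?_, ?_⟩
  · -- kernel cardinality
    rw [aux_ker p q]
    have h := Nat.card_congr
      (auxProd (B := ZMod q) (fun x : ZMod (p^2) => (p : ZMod (p^2)) * x = 0))
    rw [Nat.card_prod, aux_card p hp, Nat.card_zmod] at h
    exact h
  · -- cyclicity
    have hpne2 : p ≠ 2 := by
      rintro rfl
      have hq2 : q ≠ 2 := Ne.symm hpq
      have hq1 : q % 2 = 1 := Nat.odd_iff.mp (hq.odd_of_ne_two hq2)
      exact hmod (show q % 2 = 1 % 2 by omega)
    have hoddsq : Odd (p^2) := (hp.odd_of_ne_two hpne2).pow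
    have h2 : 2 ∣ p^2 + 1 := (Odd.add_one hoddsq).two_dvd
    set c : ZMod (p^2) := (((p^2+1)/2 : ℕ) : ZMod (p^2)) with hcdef
    have hc : 2 * c = 1 := by
      have h := Nat.mul_div_cancel' h2
      calc (2 : ZMod (p^2)) * c
          = ((2 * ((p^2+1)/2) : ℕ) : ZMod (p^2)) := by rw [hcdef]; push_cast; ring
        _ = ((p^2+1 : ℕ) : ZMod (p^2)) := by rw [h]
        _ = 1 := by rw [Nat.cast_add, ZMod.natCast_self, Nat.cast_one, zero_add]
    have hco : Nat.Coprime (p^2) q := ((Nat.coprime_primes hp hq).mpr hpq).pow_left 2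
    set crt := ZMod.chineseRemainder hco with hcrt
    set ψ := auxPsi p c hP with hψ
    refine ⟨(Equiv.prodCongr ψ (Equiv.refl (ZMod q))).trans crt.symm.toEquiv, ?_⟩
    intro a b
    show crt.symm (ψ (circ5 p q a b).1, (circ5 p q a b).2)
        = crt.symm (ψ a.1, a.2) + crt.symm (ψ b.1, b.2)
    rw [← map_add]
    congr 1
    rw [Prod.ext_iff]
    exact ⟨auxPsiHom p c hP hc a.1 b.1, rfl⟩
end

section
/- Let p and q be distinct primes with q ≢ 1 (mod p). Then any two left braces whose additive group is cyclic of order p²q and whose kernel of λ has order pq are isomorphic as braces. -/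
namespace IsLeftBrace

variable {B : Type*} [AddCommGroup B] {f : B → B → B}

def lambda (hf : IsLeftBrace f) (a : B) : AddMonoid.End B :=
  AddMonoidHom.mk' (fun b => -a + f a b) fun b c => by rw [hf.2.2.2.2]; abel

theorem lambda_apply (hf : IsLeftBrace f) (a b : B) : hf.lambda a b = -a + f a b := rfl

theorem circ_eq_add_lambda (hf : IsLeftBrace f) (a b : B) : f a b = a + hf.lambda a b := by
  rw [lambda_apply, add_neg_cancel_left]

theorem lambda_circ (hf : IsLeftBrace f) (a b : B) :
    hf.lambda (f a b) = hf.lambda a * hf.lambda b := by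
  ext c
  rw [AddMonoid.End.coe_mul, Function.comp_apply, lambda_apply, hf.1, circ_eq_add_lambda hf b c,
    hf.2.2.2.2, lambda_apply, lambda_apply]
  abel

theorem mem_kerLambda_iff (hf : IsLeftBrace f) (a : B) : a ∈ kerLambda f ↔ hf.lambda a = 1 := by
  simp only [kerLambda, Set.mem_ofPred_eq, DFunLike.ext_iff, lambda_apply, AddMonoid.End.coe_one,
    id_eq, neg_add_eq_iff_eq_add]

theorem lambda_zero (hf : IsLeftBrace f) : hf.lambda 0 = 1 :=
  (hf.mem_kerLambda_iff 0).1 fun b => by rw [hf.2.1, zero_add]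

noncomputable abbrev group (hf : IsLeftBrace f) : Group B :=
  letI : Mul B := ⟨f⟩
  letI : One B := ⟨0⟩
  letI : Inv B := ⟨fun a => (hf.2.2.2.1 a).choose⟩
  Group.ofLeftAxioms hf.1 hf.2.1 fun a => (hf.2.2.2.1 a).choose_spec

def kerLambdaAddSubgroup (hf : IsLeftBrace f) : AddSubgroup B where
  carrier := kerLambda f
  zero_mem' := (hf.mem_kerLambda_iff 0).2 hf.lambda_zero
  add_mem' {a b} ha hb := by
    rw [← ha b, hf.mem_kerLambda_iff, hf.lambda_circ, (hf.mem_kerLambda_iff a).1 ha,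
      (hf.mem_kerLambda_iff b).1 hb, one_mul]
  neg_mem' {a} ha := by
    obtain ⟨a', ha'⟩ := hf.2.2.2.1 a
    have hlam' : hf.lambda a' = 1 :=
      calc hf.lambda a' = hf.lambda a' * hf.lambda a := by
            rw [(hf.mem_kerLambda_iff a).1 ha, mul_one]
        _ = 1 := by rw [← hf.lambda_circ, ha', hf.lambda_zero]
    have hsum : a' + a = 0 := by rw [← (hf.mem_kerLambda_iff a').2 hlam' a, ha']
    rw [neg_eq_of_add_eq_zero_left hsum]
    exact (hf.mem_kerLambda_iff a').2 hlam'

theorem lambda_pow_card_div_eq_one (hf : IsLeftBrace f) (a : B) :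
    hf.lambda a ^ (Nat.card B / Nat.card (kerLambda f)) = 1 := by
  let _ := hf.group
  let Λ : B →* AddMonoid.End B :=
    { toFun := hf.lambda, map_one' := hf.lambda_zero, map_mul' := hf.lambda_circ }
  have hK : (Λ.ker : Set B) = kerLambda f := Set.ext fun a => (hf.mem_kerLambda_iff a).symm
  rcases (Nat.card (kerLambda f)).eq_zero_or_pos with h0 | hpos
  · rw [h0, Nat.div_zero, pow_zero]
  have hindex : Λ.ker.index = Nat.card B / Nat.card (kerLambda f) := by
    rw [← hK]
    exact Nat.eq_div_of_mul_eq_right (hK ▸ hpos.ne') Λ.ker.card_mul_index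
  rw [← hindex, ← Λ.mem_ker.1 (Λ.ker.pow_index_mem a), map_pow]
  rfl

theorem card_div_nsmul_mem_kerLambda (hf : IsLeftBrace f) (b : B) :
    (Nat.card B / Nat.card (kerLambda f)) • b ∈ kerLambda f := by
  rcases (Nat.card (kerLambda f)).eq_zero_or_pos with h0 | hpos
  · rw [h0, Nat.div_zero, zero_smul]
    exact hf.kerLambdaAddSubgroup.zero_mem
  rw [← Nat.eq_div_of_mul_eq_right hpos.ne' hf.kerLambdaAddSubgroup.card_mul_index]
  exact hf.kerLambdaAddSubgroup.nsmul_index_mem b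

end IsLeftBrace

namespace ZMod

theorem addMonoidEnd_apply_eq_mul {N : ℕ} (L : AddMonoid.End (ZMod N)) (b : ZMod N) :
    L b = L 1 * b := by
  simpa [mul_comm] using ZMod.map_smul L b 1

theorem natCast_dvd_of_castHom_eq_zero {m N : ℕ} [NeZero N] (h : m ∣ N) {x : ZMod N}
    (hx : castHom h (ZMod m) x = 0) : (m : ZMod N) ∣ x := by
  rw [castHom_apply, ← natCast_val, natCast_eq_zero_iff] at hx
  obtain ⟨t, ht⟩ := hx
  exact ⟨t, by rw [← natCast_zmod_val x, ht, Nat.cast_mul]⟩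

theorem eq_one_of_pow_eq_one_of_coprime {q n : ℕ} [Fact q.Prime] {y : ZMod q} (hy : y ^ n = 1)
    (hn0 : n ≠ 0) (hn : n.Coprime (q - 1)) : y = 1 := by
  have hy0 : y ≠ 0 := by
    rintro rfl
    rw [zero_pow hn0] at hy
    exact zero_ne_one hy
  exact (pow_eq_one_iff_of_coprime hn).1 ⟨hy, pow_card_sub_one_eq_one hy0⟩

theorem natCast_mul_dvd_sub_one_of_pow_eq_one_s6 {p q N : ℕ} [NeZero N] (hp : p.Prime)
    (hq : q.Prime) (hpq : p ≠ q) (hmod : ¬ q ≡ 1 [MOD p]) (hpN : p ∣ N) (hqN : q ∣ N)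
    {x : ZMod N} (hx : x ^ p = 1) : (p * q : ZMod N) ∣ x - 1 := by
  have := Fact.mk hp
  have := Fact.mk hq
  have hxp : castHom hpN (ZMod p) x = 1 := by
    rw [← pow_card (castHom hpN _ x), ← map_pow, hx, map_one]
  have hxq : castHom hqN (ZMod q) x = 1 := by
    refine eq_one_of_pow_eq_one_of_coprime (n := p) (by rw [← map_pow, hx, map_one]) hp.ne_zero ?_
    rw [hp.coprime_iff_not_dvd, ← Nat.modEq_iff_dvd' hq.one_lt.le]
    exact fun h => hmod h.symm
  refine ((Nat.coprime_primes hp hq).2 hpq).cast.mul_dvd ?_ ?_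
  · exact natCast_dvd_of_castHom_eq_zero hpN (by rw [map_sub, hxp, map_one, sub_self])
  · exact natCast_dvd_of_castHom_eq_zero hqN (by rw [map_sub, hxq, map_one, sub_self])

theorem exists_unit_mul_eq_mul {p N : ℕ} [NeZero N] [Fact p.Prime] (hpN : p ∣ N)
    {m t : ZMod N} (hmp : m * p = 0) (hmt : m * t ≠ 0) : ∃ μ : (ZMod N)ˣ, m * t = m * μ := by
  -- `m * t` only depends on `t mod p`, whose residue is a unit and lifts to one
  have ht : castHom hpN (ZMod p) t ≠ 0 := fun h => by
    obtain ⟨s, hs⟩ := natCast_dvd_of_castHom_eq_zero hpN h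
    exact hmt (by rw [hs, ← mul_assoc, hmp, zero_mul])
  obtain ⟨μ, hμ⟩ := unitsMap_surjective hpN (Units.mk0 _ ht)
  obtain ⟨s, hs⟩ : (p : ZMod N) ∣ μ - t := by
    refine natCast_dvd_of_castHom_eq_zero hpN ?_
    have hμt := congrArg Units.val hμ
    rw [unitsMap_val, Units.val_mk0] at hμt
    rw [map_sub, sub_eq_zero]
    exact hμt
  exact ⟨μ, by linear_combination (-m) * hs - s * hmp⟩

end ZMod

namespace IsLeftBrace

variable {N : ℕ} {g : ZMod N → ZMod N → ZMod N}

theorem circ_eq_add_mul (hg : IsLeftBrace g) (a b : ZMod N) : g a b = a + hg.lambda a 1 * b := by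
  rw [hg.circ_eq_add_lambda, ZMod.addMonoidEnd_apply_eq_mul]

theorem lambda_one_circ (hg : IsLeftBrace g) (a b : ZMod N) :
    hg.lambda (g a b) 1 = hg.lambda a 1 * hg.lambda b 1 := by
  rw [hg.lambda_circ, AddMonoid.End.coe_mul, Function.comp_apply, ZMod.addMonoidEnd_apply_eq_mul]

theorem mem_kerLambda_iff_lambda_one (hg : IsLeftBrace g) (a : ZMod N) :
    a ∈ kerLambda g ↔ hg.lambda a 1 = 1 := by
  rw [hg.mem_kerLambda_iff, DFunLike.ext_iff]
  refine ⟨fun h => h 1, fun h b => ?_⟩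
  rw [ZMod.addMonoidEnd_apply_eq_mul, h, one_mul, AddMonoid.End.coe_one, id]

theorem lambda_one_pow_card_div_eq_one (hg : IsLeftBrace g) (a : ZMod N) :
    hg.lambda a 1 ^ (Nat.card (ZMod N) / Nat.card (kerLambda g)) = 1 := by
  have hpow (L : AddMonoid.End (ZMod N)) (n : ℕ) : (L ^ n) 1 = L 1 ^ n := by
    induction n with
    | zero => rw [pow_zero, pow_zero, AddMonoid.End.coe_one, id]
    | succ n ih =>
      rw [pow_succ', AddMonoid.End.coe_mul, Function.comp_apply, ih,
        ZMod.addMonoidEnd_apply_eq_mul, pow_succ']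
  rw [← hpow, hg.lambda_pow_card_div_eq_one, AddMonoid.End.coe_one, id]

theorem circ_eq_add_add_mul (hg : IsLeftBrace g) {c : ZMod N}
    (hdvd : ∀ a, c ∣ hg.lambda a 1 - 1) (hker : ∀ x, c * x ∈ kerLambda g) (hcc : c * c = 0)
    (a b : ZMod N) : g a b = a + b + (hg.lambda 1 1 - 1) * a * b := by
  have hsq (a b : ZMod N) : (hg.lambda a 1 - 1) * (hg.lambda b 1 - 1) = 0 := by
    obtain ⟨s, hs⟩ := hdvd a
    obtain ⟨t, ht⟩ := hdvd b
    rw [hs, ht]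
    linear_combination (s * t) * hcc
  have hmul (a b : ZMod N) : hg.lambda (a + b) 1 = hg.lambda a 1 * hg.lambda b 1 := by
    obtain ⟨t, ht⟩ := hdvd a
    have hx : (hg.lambda a 1 - 1) * -b ∈ kerLambda g := by rw [ht, mul_assoc]; exact hker _
    -- `a + b = x ∘ (a ∘ b)` with `x ∈ ker λ`
    have hsum : (hg.lambda a 1 - 1) * -b + g a b = a + b := by rw [hg.circ_eq_add_mul]; ring
    rw [← hsum, ← hx, hg.lambda_one_circ, (hg.mem_kerLambda_iff_lambda_one _).1 hx, one_mul,
      hg.lambda_one_circ]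
  let v : AddMonoid.End (ZMod N) := AddMonoidHom.mk' (fun a => hg.lambda a 1 - 1) fun a b => by
    linear_combination hmul a b + hsq a b
  have hv : hg.lambda a 1 - 1 = (hg.lambda 1 1 - 1) * a := ZMod.addMonoidEnd_apply_eq_mul v a
  linear_combination hg.circ_eq_add_mul a b + b * hv

end IsLeftBrace

theorem IsLeftBrace.exists_unit_circ_eq {p q : ℕ} (hp : p.Prime) (hq : q.Prime) (hpq : p ≠ q)
    (hmod : ¬ q ≡ 1 [MOD p]) {g : ZMod (p ^ 2 * q) → ZMod (p ^ 2 * q) → ZMod (p ^ 2 * q)}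
    (hg : IsLeftBrace g) (hk : Nat.card (kerLambda g) = p * q) :
    ∃ μ : (ZMod (p ^ 2 * q))ˣ, ∀ a b,
      g a b = a + b + (p * q : ZMod (p ^ 2 * q)) * (μ : ZMod (p ^ 2 * q)) * a * b := by
  have : Fact p.Prime := ⟨hp⟩
  have : NeZero (p ^ 2 * q) := ⟨by simp [hp.ne_zero, hq.ne_zero]⟩
  have hpN : p ∣ p ^ 2 * q := Dvd.intro (p * q) (by ring)
  have hqN : q ∣ p ^ 2 * q := Dvd.intro_left _ rfl
  have hcard_div : Nat.card (ZMod (p ^ 2 * q)) / Nat.card (kerLambda g) = p := by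
    rw [Nat.card_zmod, hk, show p ^ 2 * q = p * (p * q) by ring,
      Nat.mul_div_cancel _ (Nat.mul_pos hp.pos hq.pos)]
  have hpqp : (p * q * p : ZMod (p ^ 2 * q)) = 0 := by
    have h := ZMod.natCast_self (p ^ 2 * q)
    push_cast at h
    linear_combination h
  have hdvd (a) : (p * q : ZMod (p ^ 2 * q)) ∣ hg.lambda a 1 - 1 := by
    have hpow := hg.lambda_one_pow_card_div_eq_one a
    rw [hcard_div] at hpow
    exact ZMod.natCast_mul_dvd_sub_one_of_pow_eq_one_s6 hp hq hpq hmod hpN hqN hpow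
  have hker (x) : (p * q : ZMod (p ^ 2 * q)) * x ∈ kerLambda g := by
    have hmem := hg.card_div_nsmul_mem_kerLambda (q * x)
    rwa [hcard_div, nsmul_eq_mul, ← mul_assoc] at hmem
  have hcirc :=
    hg.circ_eq_add_add_mul hdvd hker (by linear_combination (q : ZMod (p ^ 2 * q)) * hpqp)
  obtain ⟨t, ht⟩ := hdvd 1
  have hne : (p * q : ZMod (p ^ 2 * q)) * t ≠ 0 := fun h0 => by
    have hall : kerLambda g = Set.univ := Set.eq_univ_of_forall fun a b => by
      rw [hcirc, ht, h0]
      ring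
    rw [hall, Nat.card_univ, Nat.card_zmod, show p ^ 2 * q = p * (p * q) by ring] at hk
    exact hp.one_lt.ne'
      (Nat.eq_of_mul_eq_mul_right (Nat.mul_pos hp.pos hq.pos) (hk.trans (one_mul _).symm))
  obtain ⟨μ, hμ⟩ := ZMod.exists_unit_mul_eq_mul hpN hpqp hne
  exact ⟨μ, fun a b => by rw [hcirc, ht, hμ]⟩

section Transport

variable {B C : Type*} [AddCommGroup B] [AddCommGroup C] {f : B → B → B}

theorem IsLeftBrace.conj (hf : IsLeftBrace f) (e : B ≃+ C) :
    IsLeftBrace fun x y => e (f (e.symm x) (e.symm y)) := by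
  obtain ⟨hassoc, hzero_circ, hcirc_zero, hinv, hdist⟩ := hf
  refine ⟨fun a b c => ?_, fun a => ?_, fun a => ?_, fun a => ?_, fun a b c => ?_⟩
  · simp [hassoc]
  · simp [hzero_circ]
  · simp [hcirc_zero]
  · obtain ⟨a', ha'⟩ := hinv (e.symm a)
    exact ⟨e a', by simp [ha']⟩
  · simp [hdist]

theorem kerLambda_conj (e : B ≃+ C) :
    kerLambda (fun x y => e (f (e.symm x) (e.symm y))) = e '' kerLambda f := by
  ext x
  change _ ↔ x ∈ e.toEquiv '' _
  rw [Set.mem_image_equiv]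
  refine e.surjective.forall.trans (forall_congr' fun b => ?_)
  rw [← e.symm.injective.eq_iff, e.symm_apply_apply, e.symm_apply_apply, map_add,
    e.symm_apply_apply]
  exact Iff.rfl

end Transport

theorem IsLeftBrace.exists_addEquiv_zmod {p q : ℕ} (hp : p.Prime) (hq : q.Prime) (hpq : p ≠ q)
    (hmod : ¬ q ≡ 1 [MOD p]) {B : Type*} [AddCommGroup B] (hcyc : IsAddCyclic B)
    (hcard : Nat.card B = p ^ 2 * q) {f : B → B → B} (hf : IsLeftBrace f)
    (hk : Nat.card (kerLambda f) = p * q) :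
    ∃ e : B ≃+ ZMod (p ^ 2 * q), ∀ a b, e (f a b) = e a + e b + p * q * e a * e b := by
  let e₀ : B ≃+ ZMod (p ^ 2 * q) := (hcard ▸ zmodAddCyclicAddEquiv hcyc).symm
  have hk₀ : Nat.card (kerLambda fun x y => e₀ (f (e₀.symm x) (e₀.symm y))) = p * q := by
    rw [kerLambda_conj, Nat.card_image_of_injective e₀.injective, hk]
  obtain ⟨μ, hμ⟩ := (hf.conj e₀).exists_unit_circ_eq hp hq hpq hmod hk₀
  refine ⟨e₀.trans (DistribMulAction.toAddEquiv _ μ), fun a b => ?_⟩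
  have hμab := hμ (e₀ a) (e₀ b)
  simp only [AddEquiv.symm_apply_apply] at hμab
  simp only [AddEquiv.trans_apply, DistribMulAction.toAddEquiv_apply, Units.smul_def, smul_eq_mul,
    hμab]
  ring

/-- Let `p, q` be distinct primes with `q ≢ 1 (mod p)`.  Any two left braces whose
additive group is cyclic of order `p²q` and whose kernel of `λ` has order `pq` are
isomorphic as braces. -/
theorem stmt_6 (p q : ℕ) (hp : p.Prime) (hq : q.Prime) (hpq : p ≠ q)
    (hmod : ¬ q ≡ 1 [MOD p])
    (B₁ : Type*) [AddCommGroup B₁] (B₂ : Type*) [AddCommGroup B₂]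
    (hcyc₁ : IsAddCyclic B₁) (hcyc₂ : IsAddCyclic B₂)
    (hcard₁ : Nat.card B₁ = p ^ 2 * q) (hcard₂ : Nat.card B₂ = p ^ 2 * q)
    (f₁ : B₁ → B₁ → B₁) (f₂ : B₂ → B₂ → B₂)
    (hb₁ : IsLeftBrace f₁) (hb₂ : IsLeftBrace f₂)
    (hk₁ : Nat.card ↥(kerLambda f₁) = p * q) (hk₂ : Nat.card ↥(kerLambda f₂) = p * q) :
    ∃ e : B₁ ≃ B₂, (∀ a b, e (a + b) = e a + e b) ∧
      ∀ a b, e (f₁ a b) = f₂ (e a) (e b) := by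
  obtain ⟨e₁, h₁⟩ := hb₁.exists_addEquiv_zmod hp hq hpq hmod hcyc₁ hcard₁ hk₁
  obtain ⟨e₂, h₂⟩ := hb₂.exists_addEquiv_zmod hp hq hpq hmod hcyc₂ hcard₂ hk₂
  let e := e₁.trans e₂.symm
  refine ⟨e.toEquiv, map_add e, fun a b => e₂.injective ?_⟩
  simp [e, h₁, h₂]
end

section
/- Let p be an odd prime and q a prime with q ≡ 1 (mod p), and let r be an element of multiplicative order p in (ℤ/q)ˣ. For each pair (j,k) in {(1,0)} ∪ {(j,1) : 0 ≤ j ≤ p−1}, define on the set B = ℤ/p² × ℤ/q with componentwise addition + the operation (n,m) ∘ (s,t) = (n + (j·n·p + 1)·s, m + r^{k·n}·t) (the exponent k·n taken modulo p is well defined since r has order p). Then each (B_{(j,k)},+,∘) is a left brace with kernel of λ of order pq; (B_{(1,0)},∘) is cyclic of order p²q, while for each 0 ≤ j ≤ p−1 the group (B_{(j,1)},∘) is isomorphic to the semidirect product ℤ/q ⋊ ℤ/p² in which the generator 1 of ℤ/p² acts by multiplication by r. Moreover the p+1 left braces B_{(1,0)}, B_{(0,1)}, …, B_{(p−1,1)}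 are pairwise non-isomorphic as braces. -/
/-- The circle operation `(n,m) ∘ (s,t) = (n + (j n p + 1) s, m + r^{k n} t)` on
`ℤ/p² × ℤ/q`, where `r` is a unit of `ℤ/q` of order `p` (so that the exponent `k n`
only matters modulo `p`). -/
def circ15 (p q : ℕ) (r : (ZMod q)ˣ) (j k : ℕ) :
    ZMod (p ^ 2) × ZMod q → ZMod (p ^ 2) × ZMod q → ZMod (p ^ 2) × ZMod q :=
  fun x y => (x.1 + ((j : ZMod (p ^ 2)) * x.1 * (p : ZMod (p ^ 2)) + 1) * y.1,
              x.2 + (r : ZMod q) ^ (k * (x.1).val) * y.2)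

section PowVal

variable {G : Type*} [Monoid G] {g : G}

theorem pow_mod_of_orderOf_dvd {m : ℕ} (hg : orderOf g ∣ m) (n : ℕ) : g ^ (n % m) = g ^ n := by
  rw [← pow_mod_orderOf, Nat.mod_mod_of_dvd n hg, pow_mod_orderOf]

theorem pow_val_add_of_orderOf_dvd {n : ℕ} [NeZero n] (hg : orderOf g ∣ n) (a b : ZMod n) :
    g ^ (a + b).val = g ^ a.val * g ^ b.val := by
  rw [ZMod.val_add, pow_mod_of_orderOf_dvd hg, pow_add]

theorem pow_val_castHom_of_orderOf_dvd {m n : ℕ} [NeZero n] (hmn : m ∣ n) (hg : orderOf g ∣ m)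
    (a : ZMod n) : g ^ (ZMod.castHom hmn (ZMod m) a).val = g ^ a.val := by
  rw [ZMod.castHom_apply, ZMod.cast_eq_val, ZMod.val_natCast, pow_mod_of_orderOf_dvd hg]

theorem pow_val_inj_of_orderOf_eq {n : ℕ} [NeZero n] (hg : orderOf g = n) {a b : ZMod n} :
    g ^ a.val = g ^ b.val ↔ a = b := by
  have hfin : IsOfFinOrder g := orderOf_pos_iff.mp (hg ▸ NeZero.pos n)
  rw [hfin.pow_eq_pow_iff_modEq, hg, ← ZMod.natCast_eq_natCast_iff, ZMod.natCast_zmod_val,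
    ZMod.natCast_zmod_val]

end PowVal

section Circle

variable {R S : Type*} [CommRing R] [CommRing S]

def circleEquiv (h : R) (hh : h ^ 2 = 0) : R ≃ R where
  toFun x := x - h * x ^ 2
  invFun x := x + h * x ^ 2
  left_inv x := by linear_combination (-2 * x ^ 3 + h * x ^ 4) * hh
  right_inv x := by linear_combination (-2 * x ^ 3 - h * x ^ 4) * hh

theorem circleEquiv_apply (h : R) (hh : h ^ 2 = 0) (x : R) :
    circleEquiv h hh x = x - h * x ^ 2 := rfl

theorem circleEquiv_circ {h c : R} (hh : h ^ 2 = 0) (hc : 2 * h = c) (x y : R) :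
    circleEquiv h hh (x + (c * x + 1) * y) = circleEquiv h hh x + circleEquiv h hh y := by
  subst hc
  simp only [circleEquiv_apply]
  linear_combination (-4 * x * y * (x + y) - 4 * h * x ^ 2 * y ^ 2) * hh

def circOp (c : R) (χ : R → S) (x y : R × S) : R × S :=
  (x.1 + (c * x.1 + 1) * y.1, x.2 + χ x.1 * y.2)

theorem isLeftBrace_circOp {c : R} {χ : R → S} (hc : c ^ 2 = 0) (hχ0 : χ 0 = 1)
    (hχ : ∀ x y, χ (x + (c * x + 1) * y) = χ x * χ y) : IsLeftBrace (circOp c χ) := by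
  refine ⟨fun x y z => ?_, fun x => ?_, fun x => ?_, fun x => ?_, fun x y z => ?_⟩
  · ext <;> simp only [circOp, hχ] <;> ring
  · ext <;> simp [circOp, hχ0]
  · ext <;> simp [circOp]
  · refine ⟨(-x.1 + c * x.1 ^ 2, -(χ (-x.1 + c * x.1 ^ 2) * x.2)), ?_⟩
    ext
    · simp only [circOp, Prod.fst_zero]
      linear_combination x.1 ^ 3 * hc
    · simp only [circOp, Prod.snd_zero]
      ring
  · ext <;> simp only [circOp, Prod.fst_add, Prod.snd_add, Prod.fst_sub, Prod.snd_sub] <;> ring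

theorem kerLambda_circOp (c : R) (χ : R → S) :
    kerLambda (circOp c χ) = {x | c * x.1 = 0 ∧ χ x.1 = 1} := by
  ext x
  simp only [kerLambda, circOp, Set.mem_ofPred_eq, Prod.ext_iff, Prod.fst_add, Prod.snd_add]
  constructor
  · intro h
    exact ⟨by linear_combination (h (1, 0)).1, by linear_combination (h (0, 1)).2⟩
  · rintro ⟨h1, h2⟩ y
    exact ⟨by linear_combination y.1 * h1, by linear_combination y.2 * h2⟩

end Circle

abbrev reduceModP (p : ℕ) : ZMod (p ^ 2) →+* ZMod p :=
  ZMod.castHom (dvd_pow_self p two_ne_zero) (ZMod p)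

section ReduceModP

variable {p : ℕ} [NeZero p]

theorem natCast_mul_eq_zero_iff_reduceModP (n : ZMod (p ^ 2)) :
    (p : ZMod (p ^ 2)) * n = 0 ↔ reduceModP p n = 0 := by
  rw [ZMod.castHom_apply, ZMod.cast_eq_val, ZMod.natCast_eq_zero_iff, ← ZMod.natCast_zmod_val n,
    ← Nat.cast_mul, ZMod.natCast_zmod_val, ZMod.natCast_eq_zero_iff]
  generalize n.val = m
  rw [sq, Nat.mul_dvd_mul_iff_left (NeZero.pos p)]

theorem card_ker_reduceModP : Nat.card {n : ZMod (p ^ 2) | reduceModP p n = 0} = p := by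
  have hindex := (reduceModP p).toAddMonoidHom.ker.card_mul_index
  rw [AddSubgroup.index_ker, AddMonoidHom.range_eq_top_of_surjective _
    (ZMod.ringHom_surjective _), AddSubgroup.card_top, Nat.card_zmod, Nat.card_zmod] at hindex
  exact Nat.eq_of_mul_eq_mul_right (NeZero.pos p) (hindex.trans (sq p))

variable {G : Type*} [Monoid G] {g : G}

theorem pow_val_eq_one_iff_reduceModP (hg : orderOf g = p) (n : ZMod (p ^ 2)) :
    g ^ n.val = 1 ↔ reduceModP p n = 0 := by
  rw [← pow_val_castHom_of_orderOf_dvd _ hg.dvd, ← pow_zero g, ← ZMod.val_zero,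
    pow_val_inj_of_orderOf_eq hg]

theorem pow_val_circ (hg : orderOf g ∣ p) (j : ℕ) (x y : ZMod (p ^ 2)) :
    g ^ (x + ((j : ZMod (p ^ 2)) * p * x + 1) * y).val = g ^ x.val * g ^ y.val := by
  simp only [← pow_val_castHom_of_orderOf_dvd (dvd_pow_self p two_ne_zero) hg, map_add, map_mul,
    map_natCast, map_one, ZMod.natCast_self, mul_zero, zero_mul, zero_add, one_mul,
    pow_val_add_of_orderOf_dvd hg]

end ReduceModP

section Circ15

variable {p q : ℕ} {r : (ZMod q)ˣ}

theorem circ15_eq_circOp (j k : ℕ) :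
    circ15 p q r j k = circOp ((j : ZMod (p ^ 2)) * p) (fun n => ((r : ZMod q) ^ k) ^ n.val) := by
  funext x y
  ext <;> simp only [circ15, circOp, pow_mul]
  ring

theorem isLeftBrace_circ15 [NeZero p] (hr : orderOf r = p) (j k : ℕ) :
    IsLeftBrace (circ15 p q r j k) := by
  rw [circ15_eq_circOp]
  refine isLeftBrace_circOp ?_ (by rw [ZMod.val_zero, pow_zero]) fun x y => ?_
  · rw [mul_pow, ← Nat.cast_pow p 2, ZMod.natCast_self, mul_zero]
  · exact pow_val_circ ((orderOf_pow_dvd k).trans (orderOf_units.trans hr).dvd) j x y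

theorem kerLambda_circ15 [NeZero p] (hr : orderOf r = p) {j k : ℕ} (hjk : (j, k) = (1, 0) ∨ k = 1) :
    kerLambda (circ15 p q r j k) = {x | reduceModP p x.1 = 0} := by
  rw [circ15_eq_circOp, kerLambda_circOp]
  ext x
  simp only [Set.mem_ofPred_eq]
  rcases hjk with hjk | rfl
  · obtain ⟨rfl, rfl⟩ := Prod.mk.inj hjk
    simp [natCast_mul_eq_zero_iff_reduceModP]
  · rw [pow_one, pow_val_eq_one_iff_reduceModP (orderOf_units.trans hr)]
    refine ⟨And.right, fun h => ⟨?_, h⟩⟩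
    rw [mul_assoc, (natCast_mul_eq_zero_iff_reduceModP x.1).mpr h, mul_zero]

theorem card_kerLambda_circ15 [NeZero p] (hr : orderOf r = p) {j k : ℕ}
    (hjk : (j, k) = (1, 0) ∨ k = 1) :
    Nat.card (kerLambda (circ15 p q r j k)) = p * q := by
  rw [kerLambda_circ15 hr hjk]
  calc Nat.card {x : ZMod (p ^ 2) × ZMod q | reduceModP p x.1 = 0}
      = Nat.card ({n : ZMod (p ^ 2) | reduceModP p n = 0} × ZMod q) :=
        Nat.card_congr <|
          Equiv.prodSubtypeFstEquivSubtypeProd (p := (· ∈ {n | reduceModP p n = 0}))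
    _ = p * q := by rw [Nat.card_prod, card_ker_reduceModP, Nat.card_zmod]

end Circ15

section FstEquiv

variable {p : ℕ}

-- `h = p j / 2`, so that `2 h = j p` when `p` is odd.
def circFstEquiv (p j : ℕ) : ZMod (p ^ 2) ≃ ZMod (p ^ 2) :=
  circleEquiv ((p : ZMod (p ^ 2)) * (2⁻¹ * j))
    (by rw [mul_pow, ← Nat.cast_pow p 2, ZMod.natCast_self, zero_mul])

theorem circFstEquiv_circ (hp : Odd p) (j : ℕ) (x y : ZMod (p ^ 2)) :
    circFstEquiv p j (x + ((j : ZMod (p ^ 2)) * (p : ZMod (p ^ 2)) * x + 1) * y) =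
      circFstEquiv p j x + circFstEquiv p j y := by
  have htwo : (2 : ZMod (p ^ 2)) * 2⁻¹ = 1 := by
    exact_mod_cast ZMod.coe_mul_inv_eq_one 2 ((Nat.coprime_two_left.mpr hp).pow_right 2)
  exact circleEquiv_circ (c := (j : ZMod (p ^ 2)) * p) _
    (by linear_combination ((p : ZMod (p ^ 2)) * j) * htwo) x y

theorem reduceModP_circFstEquiv (j : ℕ) (x : ZMod (p ^ 2)) :
    reduceModP p (circFstEquiv p j x) = reduceModP p x := by
  simp [circFstEquiv, circleEquiv_apply]

end FstEquiv

section Circ15Groups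

variable {p q : ℕ} {r : (ZMod q)ˣ}

theorem exists_equiv_zmod_circ15_one_zero (hp : Odd p) (hpq : (p ^ 2).Coprime q) :
    ∃ e : ZMod (p ^ 2) × ZMod q ≃ ZMod (p ^ 2 * q),
      ∀ a b, e (circ15 p q r 1 0 a b) = e a + e b := by
  refine ⟨((circFstEquiv p 1).prodCongr (Equiv.refl _)).trans
    (ZMod.chineseRemainder hpq).symm.toEquiv, fun a b => ?_⟩
  simp only [Equiv.trans_apply, Equiv.prodCongr_apply, Prod.map, Equiv.refl_apply,
    RingEquiv.toEquiv_eq_coe, RingEquiv.coe_toEquiv, ← map_add, circ15_eq_circOp, circOp,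
    circFstEquiv_circ hp, pow_zero, one_pow, one_mul, Prod.mk_add_mk]

theorem exists_equiv_semidirect_circ15 [NeZero p] (hp : Odd p) (hr : orderOf r = p) (j : ℕ) :
    ∃ e : ZMod (p ^ 2) × ZMod q ≃ ZMod q × ZMod (p ^ 2),
      ∀ a b, e (circ15 p q r j 1 a b) =
        ((e a).1 + (r : ZMod q) ^ ((e a).2).val * (e b).1, (e a).2 + (e b).2) := by
  refine ⟨(Equiv.prodComm _ _).trans ((Equiv.refl _).prodCongr (circFstEquiv p j)),
    fun a b => ?_⟩
  have hexp : (r : ZMod q) ^ (circFstEquiv p j a.1).val = (r : ZMod q) ^ a.1.val := by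
    simp only [← pow_val_castHom_of_orderOf_dvd (dvd_pow_self p two_ne_zero)
      (orderOf_units.trans hr).dvd, reduceModP_circFstEquiv]
  simp only [Equiv.trans_apply, Equiv.prodComm_apply, Equiv.prodCongr_apply, Prod.map,
    Equiv.refl_apply, Prod.swap, circ15_eq_circOp, circOp, circFstEquiv_circ hp, pow_one, hexp]

end Circ15Groups

theorem comm_iff_of_equiv {α β : Type*} {f : α → α → α} {g : β → β → β} (e : α ≃ β)
    (he : ∀ a b, e (f a b) = g (e a) (e b)) :
    (∀ a b, f a b = f b a) ↔ ∀ a b, g a b = g b a := by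
  refine ⟨fun h a b => ?_, fun h a b => e.injective ?_⟩
  · simpa only [he, e.apply_symm_apply] using congrArg e (h (e.symm a) (e.symm b))
  · rw [he, he, h]

namespace ZMod

theorem addMonoidHom_eq_zero_of_coprime {m n : ℕ} (hmn : m.Coprime n) (f : ZMod m →+ ZMod n) :
    f = 0 := by
  refine AddMonoidHom.ext fun x => ?_
  have hm : (m : ZMod n) * f x = 0 := by
    rw [← nsmul_eq_mul, ← map_nsmul, nsmul_eq_mul, natCast_self, zero_mul, map_zero]
  exact (unitOfCoprime m hmn).isUnit.mul_right_eq_zero.mp hm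

theorem addMonoidHom_apply_eq_mul {n : ℕ} (f : ZMod n →+ ZMod n) (x : ZMod n) : f x = x * f 1 := by
  simpa using (f.toZModLinearMap n).map_smul x 1

theorem prod_addMonoidHom_apply {m n : ℕ} (hmn : m.Coprime n)
    (e : ZMod m × ZMod n →+ ZMod m × ZMod n) (x : ZMod m × ZMod n) :
    e x = (x.1 * (e (1, 0)).1, x.2 * (e (0, 1)).2) := by
  have hfst : ∀ b, (e (0, b)).1 = 0 := fun b =>
    DFunLike.congr_fun (addMonoidHom_eq_zero_of_coprime hmn.symm
      ((AddMonoidHom.fst _ _).comp (e.comp (AddMonoidHom.inr _ _)))) b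
  have hsnd : ∀ a, (e (a, 0)).2 = 0 := fun a =>
    DFunLike.congr_fun (addMonoidHom_eq_zero_of_coprime hmn
      ((AddMonoidHom.snd _ _).comp (e.comp (AddMonoidHom.inl _ _)))) a
  have hx : x = (x.1, 0) + (0, x.2) := by simp
  rw [hx, map_add]
  ext
  · simpa [hfst] using
      addMonoidHom_apply_eq_mul ((AddMonoidHom.fst _ _).comp (e.comp (AddMonoidHom.inl _ _))) x.1
  · simpa [hsnd] using
      addMonoidHom_apply_eq_mul ((AddMonoidHom.snd _ _).comp (e.comp (AddMonoidHom.inr _ _))) x.2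

end ZMod

section Circ15Iso

variable {p q : ℕ} {r : (ZMod q)ˣ}

theorem circ15_one_zero_comm (a b : ZMod (p ^ 2) × ZMod q) :
    circ15 p q r 1 0 a b = circ15 p q r 1 0 b a := by
  ext <;> simp only [circ15, zero_mul, pow_zero, one_mul] <;> ring

theorem circ15_one_not_comm (hp : 1 < p) (hr : orderOf r = p) (j : ℕ) :
    ¬ ∀ a b : ZMod (p ^ 2) × ZMod q, circ15 p q r j 1 a b = circ15 p q r j 1 b a := by
  intro h
  have hval : (1 : ZMod (p ^ 2)).val = 1 := ZMod.val_one'' (by nlinarith)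
  have hr1 := congrArg Prod.snd (h (1, 0) (0, 1))
  simp only [circ15, mul_one, mul_zero, add_zero, hval, pow_one, zero_add, zero_mul,
    ZMod.val_zero, pow_zero, Units.val_eq_one] at hr1
  rw [hr1, orderOf_one] at hr
  omega

theorem eq_of_circ15_iso (hp : 1 < p) (hpq : (p ^ 2).Coprime q) (hr : orderOf r = p)
    {j j' : ℕ} (hj : j < p) (hj' : j' < p) (e : ZMod (p ^ 2) × ZMod q ≃ ZMod (p ^ 2) × ZMod q)
    (hadd : ∀ a b, e (a + b) = e a + e b)
    (hcirc : ∀ a b, e (circ15 p q r j 1 a b) = circ15 p q r j' 1 (e a) (e b)) : j = j' := by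
  have : NeZero p := ⟨by omega⟩
  set c := (e (1, 0)).1
  set d := (e (0, 1)).2
  have he : ∀ x, e x = (x.1 * c, x.2 * d) :=
    ZMod.prod_addMonoidHom_apply hpq (AddMonoidHom.mk' e hadd)
  have hd : IsUnit d := by
    obtain ⟨w, hw⟩ := e.surjective (0, 1)
    exact IsUnit.of_mul_eq_one_right _ (congrArg Prod.snd ((he w).symm.trans hw))
  have hval : (1 : ZMod (p ^ 2)).val = 1 := ZMod.val_one'' (by nlinarith)
  have hc : reduceModP p c = 1 := by
    have h := congrArg Prod.snd (hcirc (1, 0) (0, 1))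
    simp only [circ15, mul_one, mul_zero, add_zero, hval, pow_one, zero_add, he, one_mul,
      zero_mul] at h
    rw [← pow_val_inj_of_orderOf_eq (orderOf_units.trans hr),
      pow_val_castHom_of_orderOf_dvd _ (orderOf_units.trans hr).dvd, ZMod.val_one'' (by omega),
      pow_one]
    exact (hd.mul_right_cancel h).symm
  have h := congrArg Prod.fst (hcirc (1, 0) (1, 0))
  simp only [circ15, mul_one, one_mul, mul_zero, add_zero, he, zero_mul] at h
  have hpc : (p : ZMod (p ^ 2)) * (j * c - j' * c ^ 2) = 0 := by linear_combination h
  simp only [natCast_mul_eq_zero_iff_reduceModP, map_sub, map_mul, map_pow, map_natCast, hc,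
    mul_one, one_pow, sub_eq_zero, ZMod.natCast_eq_natCast_iff', Nat.mod_eq_of_lt hj,
    Nat.mod_eq_of_lt hj'] at hpc
  exact hpc

end Circ15Iso

theorem stmt_15_general (p q : ℕ) (hp : p.Prime) (hpodd : Odd p)
    (hmod : q ≡ 1 [MOD p]) (r : (ZMod q)ˣ) (hr : orderOf r = p) :
    (∀ j k : ℕ, ((j, k) = (1, 0) ∨ (k = 1 ∧ j ≤ p - 1)) →
      IsLeftBrace (circ15 p q r j k) ∧
      Nat.card ↥(kerLambda (circ15 p q r j k)) = p * q) ∧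
    (∃ e : ZMod (p ^ 2) × ZMod q ≃ ZMod (p ^ 2 * q),
      ∀ a b, e (circ15 p q r 1 0 a b) = e a + e b) ∧
    (∀ j : ℕ, j ≤ p - 1 →
      ∃ e : ZMod (p ^ 2) × ZMod q ≃ ZMod q × ZMod (p ^ 2),
        ∀ a b, e (circ15 p q r j 1 a b) =
          ((e a).1 + (r : ZMod q) ^ ((e a).2).val * (e b).1, (e a).2 + (e b).2)) ∧
    (∀ j k j' k' : ℕ, ((j, k) = (1, 0) ∨ (k = 1 ∧ j ≤ p - 1)) →
      ((j', k') = (1, 0) ∨ (k' = 1 ∧ j' ≤ p - 1)) → (j, k) ≠ (j', k') →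
      ¬ ∃ e : ZMod (p ^ 2) × ZMod q ≃ ZMod (p ^ 2) × ZMod q,
          (∀ a b, e (a + b) = e a + e b) ∧
          ∀ a b, e (circ15 p q r j k a b) = circ15 p q r j' k' (e a) (e b)) := by
  have hp1 := hp.one_lt
  have : NeZero p := ⟨hp.ne_zero⟩
  have hpq : (p ^ 2).Coprime q := by
    have hqp : q.Coprime p := by simpa [Nat.Coprime] using hmod.gcd_eq
    exact hqp.symm.pow_left 2
  refine ⟨fun j k hjk => ⟨isLeftBrace_circ15 hr j k,
      card_kerLambda_circ15 hr (hjk.imp_right And.left)⟩,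
    exists_equiv_zmod_circ15_one_zero hpodd hpq,
    fun j _ => exists_equiv_semidirect_circ15 hpodd hr j, ?_⟩
  rintro j k j' k' (hjk | ⟨rfl, hj⟩) (hjk' | ⟨rfl, hj'⟩) hne ⟨e, hadd, hcirc⟩
  · exact hne (hjk.trans hjk'.symm)
  · obtain ⟨rfl, rfl⟩ := Prod.mk.inj hjk
    exact circ15_one_not_comm hp1 hr j' ((comm_iff_of_equiv e hcirc).mp circ15_one_zero_comm)
  · obtain ⟨rfl, rfl⟩ := Prod.mk.inj hjk'
    exact circ15_one_not_comm hp1 hr j ((comm_iff_of_equiv e hcirc).mpr circ15_one_zero_comm)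
  · exact hne (by rw [eq_of_circ15_iso hp1 hpq hr (by omega) (by omega) e hadd hcirc])

/-- Let `p` be an odd prime, `q` a prime with `q ≡ 1 (mod p)`, and `r` an element of
order `p` in `(ℤ/q)ˣ`.  For `(j,k) ∈ {(1,0)} ∪ {(j,1) : 0 ≤ j ≤ p-1}`, the operation
`(n,m) ∘ (s,t) = (n + (j n p + 1) s, m + r^{k n} t)` on `B = ℤ/p² × ℤ/q` makes
`(B_{(j,k)},+,∘)` a left brace with `|ker λ| = pq`; `(B_{(1,0)},∘)` is cyclic of
order `p²q`; each `(B_{(j,1)},∘)` is isomorphic to `ℤ/q ⋊ ℤ/p²` with the generator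
`1` of `ℤ/p²` acting by multiplication by `r`; and these `p + 1` left braces are
pairwise non-isomorphic. -/
theorem stmt_15 (p q : ℕ) (hp : p.Prime) (hpodd : Odd p) (hq : q.Prime)
    (hmod : q ≡ 1 [MOD p]) (r : (ZMod q)ˣ) (hr : orderOf r = p) :
    (∀ j k : ℕ, ((j, k) = (1, 0) ∨ (k = 1 ∧ j ≤ p - 1)) →
      IsLeftBrace (circ15 p q r j k) ∧
      Nat.card ↥(kerLambda (circ15 p q r j k)) = p * q) ∧
    (∃ e : ZMod (p ^ 2) × ZMod q ≃ ZMod (p ^ 2 * q),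
      ∀ a b, e (circ15 p q r 1 0 a b) = e a + e b) ∧
    (∀ j : ℕ, j ≤ p - 1 →
      ∃ e : ZMod (p ^ 2) × ZMod q ≃ ZMod q × ZMod (p ^ 2),
        ∀ a b, e (circ15 p q r j 1 a b) =
          ((e a).1 + (r : ZMod q) ^ ((e a).2).val * (e b).1, (e a).2 + (e b).2)) ∧
    (∀ j k j' k' : ℕ, ((j, k) = (1, 0) ∨ (k = 1 ∧ j ≤ p - 1)) →
      ((j', k') = (1, 0) ∨ (k' = 1 ∧ j' ≤ p - 1)) → (j, k) ≠ (j', k') →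
      ¬ ∃ e : ZMod (p ^ 2) × ZMod q ≃ ZMod (p ^ 2) × ZMod q,
          (∀ a b, e (a + b) = e a + e b) ∧
          ∀ a b, e (circ15 p q r j k a b) = circ15 p q r j' k' (e a) (e b)) :=
  stmt_15_general p q hp hpodd hmod r hr
end

section
/- Let p be an odd prime and q a prime with q ≡ 1 (mod p²). Then the group of units (ℤ/p²q)ˣ (equivalently, the automorphism group of the cyclic group of order p²q) has exactly p+1 subgroups of order p². -/
open Subgroup

private lemma card_ker_pow_cyclic {G : Type*} [CommGroup G] [Finite G] [IsCyclic G] (k : ℕ) :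
    Nat.card ((powMonoidHom k : G →* G).ker) = Nat.gcd (Nat.card G) k := by
  set n := Nat.card G with hn
  have hn0 : 0 < n := Nat.card_pos
  set T := (powMonoidHom k : G →* G).ker with hT
  obtain ⟨t, ht⟩ := IsCyclic.exists_ofOrder_eq_natCard (α := T)
  have h2 : Nat.card T ∣ k := by
    rw [← ht]
    apply orderOf_dvd_of_pow_eq_one
    have htk : ((t : G)) ^ k = 1 := t.2
    ext
    simpa using htk
  have h1 : Nat.card T ∣ n := Subgroup.card_subgroup_dvd_card T
  obtain ⟨g, hg⟩ := IsCyclic.exists_ofOrder_eq_natCard (α := G)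
  set d := Nat.gcd n k with hd
  have hdn : d ∣ n := Nat.gcd_dvd_left _ _
  have hdk : d ∣ k := Nat.gcd_dvd_right _ _
  have hd0 : 0 < d := Nat.gcd_pos_of_pos_left _ hn0
  have hmem : g ^ (n / d) ∈ T := by
    rw [hT, MonoidHom.mem_ker, powMonoidHom_apply, ← pow_mul]
    obtain ⟨k', hk'⟩ := hdk
    have : n / d * k = n * k' := by
      rw [hk', ← mul_assoc, Nat.div_mul_cancel hdn]
    rw [this, pow_mul, hn, ← hg, pow_orderOf_eq_one, one_pow]
  have hord : orderOf (g ^ (n / d)) = d := by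
    rw [orderOf_pow, hg, Nat.gcd_eq_right (Nat.div_dvd_of_dvd hdn), Nat.div_div_self hdn hn0.ne']
  have h3 : d ∣ Nat.card T := by
    have : orderOf (⟨g ^ (n / d), hmem⟩ : T) = d := by
      rw [← orderOf_submonoid ((⟨g ^ (n / d), hmem⟩ : T))]; exact hord
    rw [← this]
    exact orderOf_dvd_natCard _
  exact Nat.dvd_antisymm (Nat.dvd_gcd h1 h2) h3

private lemma card_subgroups_congr {G G' : Type*} [Group G] [Group G'] (e : G ≃* G') (n : ℕ) :
    Nat.card {H : Subgroup G // Nat.card H = n} = Nat.card {H : Subgroup G' // Nat.card H = n} := by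
  apply Nat.card_congr
  have cardmap : ∀ (H : Subgroup G), Nat.card (H.map e.toMonoidHom) = Nat.card H :=
    fun H => (Nat.card_congr (Subgroup.equivMapOfInjective H e.toMonoidHom e.injective).toEquiv).symm
  have cardmap' : ∀ (H : Subgroup G'), Nat.card (H.map e.symm.toMonoidHom) = Nat.card H :=
    fun H => (Nat.card_congr
      (Subgroup.equivMapOfInjective H e.symm.toMonoidHom e.symm.injective).toEquiv).symm
  refine ⟨fun H => ⟨H.1.map e.toMonoidHom, by rw [cardmap, H.2]⟩,
    fun K => ⟨K.1.map e.symm.toMonoidHom, by rw [cardmap', K.2]⟩, fun H => ?_, fun K => ?_⟩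
  · ext x
    simp [Subgroup.mem_map]
  · ext x
    simp [Subgroup.mem_map]

private lemma card_subgroups_subtype {G : Type*} [Group G] (T : Subgroup G) (n : ℕ)
    (h : ∀ H : Subgroup G, Nat.card H = n → H ≤ T) :
    Nat.card {H : Subgroup G // Nat.card H = n} = Nat.card {K : Subgroup T // Nat.card K = n} := by
  apply Nat.card_congr
  have cardmap : ∀ (K : Subgroup T), Nat.card (K.map T.subtype) = Nat.card K :=
    fun K => (Nat.card_congr (Subgroup.equivMapOfInjective K T.subtype
      T.subtype_injective).toEquiv).symm
  refine ⟨fun H => ⟨H.1.subgroupOf T, ?_⟩,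
    fun K => ⟨K.1.map T.subtype, by rw [cardmap, K.2]⟩, fun H => ?_, fun K => ?_⟩
  · exact (Nat.card_congr (Subgroup.subgroupOfEquivOfLe (h H.1 H.2)).toEquiv).trans H.2
  · ext x
    have hle := h H.1 H.2
    simp only [Subgroup.mem_map, Subgroup.mem_subgroupOf]
    constructor
    · rintro ⟨y, hy, rfl⟩; exact hy
    · intro hx; exact ⟨⟨x, hle hx⟩, hx, rfl⟩
  · apply Subtype.ext
    simp only
    rw [Subgroup.subgroupOf, Subgroup.comap_map_eq_self_of_injective T.subtype_injective]

private lemma ker_pow_prod {G G' : Type*} [CommGroup G] [CommGroup G'] (n : ℕ) :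
    (powMonoidHom n : G × G' →* G × G').ker =
      ((powMonoidHom n : G →* G).ker).prod ((powMonoidHom n : G' →* G').ker) := by
  ext ⟨a, b⟩
  simp [MonoidHom.mem_ker, Subgroup.mem_prod, Prod.pow_mk, Prod.ext_iff]

private lemma model_count (p : ℕ) (hp : p.Prime) :
    Nat.card {H : Subgroup (Multiplicative (ZMod p) × Multiplicative (ZMod (p ^ 2))) //
      Nat.card H = p ^ 2} = p + 1 := by
  haveI : Fact p.Prime := ⟨hp⟩
  haveI : NeZero p := ⟨hp.pos.ne'⟩
  haveI : NeZero (p ^ 2) := ⟨pow_ne_zero _ hp.pos.ne'⟩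
  have hp1 : 1 < p := hp.one_lt
  have hplt : p < p ^ 2 := by
    calc p = p ^ 1 := (pow_one p).symm
    _ < p ^ 2 := Nat.pow_lt_pow_right hp1 one_lt_two
  set M := Multiplicative (ZMod p) × Multiplicative (ZMod (p ^ 2)) with hM
  have hcard1 : Nat.card (Multiplicative (ZMod p)) = p := by
    rw [Nat.card_congr (Multiplicative.toAdd (α := ZMod p)), Nat.card_zmod]
  have hcard2 : Nat.card (Multiplicative (ZMod (p ^ 2))) = p ^ 2 := by
    rw [Nat.card_congr (Multiplicative.toAdd (α := ZMod (p ^ 2))), Nat.card_zmod]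
  -- order facts
  have hord1 : ∀ a : Multiplicative (ZMod p), orderOf a ∣ p := by
    intro a; exact (orderOf_dvd_natCard a).trans (dvd_of_eq hcard1)
  have hord2 : ∀ b : Multiplicative (ZMod (p ^ 2)), orderOf b ∣ p ^ 2 := by
    intro b; exact (orderOf_dvd_natCard b).trans (dvd_of_eq hcard2)
  have hordone : orderOf (Multiplicative.ofAdd (1 : ZMod (p ^ 2))) = p ^ 2 := by
    rw [orderOf_ofAdd_eq_addOrderOf, ZMod.addOrderOf_one]
  -- divisor of p^2 that is not p^2 divides p
  have hdvdp : ∀ m : ℕ, m ∣ p ^ 2 → m ≠ p ^ 2 → m ∣ p := by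
    intro m hm hne
    obtain ⟨i, hi, rfl⟩ := (Nat.dvd_prime_pow hp).mp hm
    have : i ≤ 1 := by
      rcases Nat.lt_or_ge i 2 with h | h
      · omega
      · exact absurd (le_antisymm hi h ▸ rfl) hne
    calc p ^ i ∣ p ^ 1 := pow_dvd_pow p this
    _ = p := pow_one p
  -- order of the standard generators
  have hordgen : ∀ c : ZMod p,
      orderOf ((Multiplicative.ofAdd c, Multiplicative.ofAdd (1 : ZMod (p ^ 2))) : M) = p ^ 2 := by
    intro c
    rw [Prod.orderOf]
    show Nat.lcm (orderOf (Multiplicative.ofAdd c))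
      (orderOf (Multiplicative.ofAdd (1 : ZMod (p ^ 2)))) = p ^ 2
    apply Nat.dvd_antisymm
    · exact Nat.lcm_dvd ((hord1 _).trans (dvd_pow_self p two_ne_zero)) (dvd_of_eq hordone)
    · exact (dvd_of_eq hordone.symm).trans (Nat.dvd_lcm_right _ _)
  have hcardgen : ∀ c : ZMod p,
      Nat.card (zpowers ((Multiplicative.ofAdd c, Multiplicative.ofAdd (1 : ZMod (p ^ 2))) : M)) =
        p ^ 2 := by
    intro c; rw [Nat.card_zpowers, hordgen]
  -- the elementary abelian subgroup
  set E : Subgroup M := (powMonoidHom p : M →* M).ker with hE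
  have hcardE : Nat.card E = p ^ 2 := by
    rw [hE, ker_pow_prod, Nat.card_congr (Subgroup.prodEquiv _ _).toEquiv, Nat.card_prod,
      card_ker_pow_cyclic, card_ker_pow_cyclic, hcard1, hcard2, Nat.gcd_self,
      Nat.gcd_eq_right (dvd_pow_self p two_ne_zero), sq]
  -- the classification map
  set F : Option (ZMod p) → {H : Subgroup M // Nat.card H = p ^ 2} := fun o =>
    Option.rec ⟨E, hcardE⟩
      (fun c => ⟨zpowers ((Multiplicative.ofAdd c, Multiplicative.ofAdd (1 : ZMod (p ^ 2))) : M),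
        hcardgen c⟩) o with hF
  -- generator not in E
  have hgennotE : ∀ c : ZMod p,
      zpowers ((Multiplicative.ofAdd c, Multiplicative.ofAdd (1 : ZMod (p ^ 2))) : M) ≠ E := by
    intro c hc
    have hmem : ((Multiplicative.ofAdd c, Multiplicative.ofAdd (1 : ZMod (p ^ 2))) : M) ∈ E :=
      hc ▸ mem_zpowers _
    rw [hE, MonoidHom.mem_ker, powMonoidHom_apply] at hmem
    have : orderOf ((Multiplicative.ofAdd c, Multiplicative.ofAdd (1 : ZMod (p ^ 2))) : M) ∣ p :=
      orderOf_dvd_of_pow_eq_one hmem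
    rw [hordgen] at this
    exact absurd (Nat.le_of_dvd hp.pos this) (not_le.mpr hplt)
  have hinj : Function.Injective F := by
    intro o o' hoo'
    have h := congrArg Subtype.val hoo'
    match o, o' with
    | none, none => rfl
    | some c, none => exact absurd h (hgennotE c)
    | none, some c => exact absurd h.symm (hgennotE c)
    | some c, some c' =>
      simp only [hF] at h
      have hmem : ((Multiplicative.ofAdd c, Multiplicative.ofAdd (1 : ZMod (p ^ 2))) : M) ∈
          zpowers ((Multiplicative.ofAdd c', Multiplicative.ofAdd (1 : ZMod (p ^ 2))) : M) :=
        h ▸ mem_zpowers _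
      obtain ⟨k, hk⟩ := mem_zpowers_iff.mp hmem
      rw [Prod.pow_mk, Prod.mk.injEq] at hk
      obtain ⟨hk1, hk2⟩ := hk
      -- from second component : (k : ZMod (p^2)) = 1
      have h2 : (k : ZMod (p ^ 2)) = 1 := by
        have := congrArg Multiplicative.toAdd hk2
        simp only [toAdd_zpow, toAdd_ofAdd] at this
        rwa [Int.smul_one_eq_cast] at this
      have hdvd : (p : ℤ) ∣ k - 1 := by
        have h3 : ((k - 1 : ℤ) : ZMod (p ^ 2)) = 0 := by push_cast [h2]; ring
        have h4 : ((p : ℤ) ^ 2) ∣ (k - 1 : ℤ) := by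
          have := (ZMod.intCast_zmod_eq_zero_iff_dvd _ _).mp h3
          exact_mod_cast this
        exact (dvd_pow_self (p : ℤ) two_ne_zero).trans h4
      have h5 : (k : ZMod p) = 1 := by
        have h6 : ((k - 1 : ℤ) : ZMod p) = 0 := by
          rw [ZMod.intCast_zmod_eq_zero_iff_dvd]; exact_mod_cast hdvd
        have : ((k : ℤ) : ZMod p) - 1 = 0 := by push_cast at h6 ⊢; linear_combination h6
        push_cast at this
        linear_combination this
      -- from first component : c = c'
      have := congrArg Multiplicative.toAdd hk1
      simp only [toAdd_zpow, toAdd_ofAdd, zsmul_eq_mul] at this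
      rw [h5, one_mul] at this
      rw [this]
  have hsurj : Function.Surjective F := by
    rintro ⟨H, hH⟩
    have hpow : ∀ x ∈ H, x ^ p ^ 2 = 1 := by
      intro x hx
      have h1 : (⟨x, hx⟩ : H) ^ p ^ 2 = 1 := by
        have h0 := pow_card_eq_one' (G := H) (x := ⟨x, hx⟩)
        rwa [hH] at h0
      have := congrArg (Subtype.val : H → M) h1
      simpa using this
    by_cases hex : ∃ x ∈ H, orderOf x = p ^ 2
    · obtain ⟨x, hxH, hxord⟩ := hex
      have hle : zpowers x ≤ H := zpowers_le.mpr hxH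
      have hHx : zpowers x = H := Subgroup.eq_of_le_of_card_ge hle
        (by rw [hH, Nat.card_zpowers, hxord])
      -- second component of x has order p^2
      have h1dvd : orderOf x.1 ∣ p := hord1 x.1
      have h2ord : orderOf x.2 = p ^ 2 := by
        by_contra hne
        have h2p : orderOf x.2 ∣ p := hdvdp _ (hord2 x.2) hne
        have : orderOf x ∣ p := by
          rw [Prod.orderOf]; exact Nat.lcm_dvd h1dvd h2p
        rw [hxord] at this
        exact absurd (Nat.le_of_dvd hp.pos this) (not_le.mpr hplt)
      -- x.2 generates, find power of x with second component ofAdd 1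
      have htop : zpowers x.2 = ⊤ := by
        apply Subgroup.eq_top_of_card_eq
        rw [Nat.card_zpowers, h2ord, hcard2]
      have hmem1 : Multiplicative.ofAdd (1 : ZMod (p ^ 2)) ∈ zpowers x.2 := by
        rw [htop]; trivial
      obtain ⟨k, hk⟩ := mem_zpowers_iff.mp hmem1
      refine ⟨some (Multiplicative.toAdd (x.1 ^ k)), ?_⟩
      apply Subtype.ext
      simp only [hF]
      have hxk : x ^ k = ((Multiplicative.ofAdd (Multiplicative.toAdd (x.1 ^ k)),
          Multiplicative.ofAdd (1 : ZMod (p ^ 2))) : M) := by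
        rw [ofAdd_toAdd, ← hk]
        rfl
      have hle2 : zpowers ((Multiplicative.ofAdd (Multiplicative.toAdd (x.1 ^ k)),
          Multiplicative.ofAdd (1 : ZMod (p ^ 2))) : M) ≤ H := by
        rw [← hxk]
        exact zpowers_le.mpr (hle (zpow_mem (mem_zpowers x) k))
      exact Subgroup.eq_of_le_of_card_ge hle2 (by rw [hH, hcardgen])
    · refine ⟨none, ?_⟩
      apply Subtype.ext
      simp only [hF]
      push_neg at hex
      have hle : H ≤ E := by
        intro x hx
        rw [hE, MonoidHom.mem_ker, powMonoidHom_apply]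
        have hdvd : orderOf x ∣ p ^ 2 := orderOf_dvd_of_pow_eq_one (hpow x hx)
        have : orderOf x ∣ p := hdvdp _ hdvd (hex x hx)
        exact orderOf_dvd_iff_pow_eq_one.mp this
      exact (Subgroup.eq_of_le_of_card_ge hle (by rw [hH, hcardE])).symm
  have : Nat.card {H : Subgroup M // Nat.card H = p ^ 2} = Nat.card (Option (ZMod p)) :=
    (Nat.card_congr (Equiv.ofBijective F ⟨hinj, hsurj⟩)).symm
  rw [this, Nat.card_eq_fintype_card, Fintype.card_option, ZMod.card]

/-- Let `p` be an odd prime and `q` a prime with `q ≡ 1 (mod p²)`.  Then the unit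
group `(ℤ/p²q)ˣ` (i.e. the automorphism group of the cyclic group of order `p²q`)
has exactly `p + 1` subgroups of order `p²`. -/
theorem stmt_16 (p q : ℕ) (hp : p.Prime) (hpodd : Odd p) (hq : q.Prime)
    (hmod : q ≡ 1 [MOD p ^ 2]) :
    Nat.card {H : Subgroup (ZMod (p ^ 2 * q))ˣ // Nat.card H = p ^ 2} = p + 1 := by
  haveI : Fact p.Prime := ⟨hp⟩
  haveI : Fact q.Prime := ⟨hq⟩
  haveI : NeZero p := ⟨hp.pos.ne'⟩
  haveI : NeZero (p ^ 2) := ⟨pow_ne_zero _ hp.pos.ne'⟩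
  haveI : NeZero (p ^ 2 * q) := ⟨Nat.mul_ne_zero (pow_ne_zero _ hp.pos.ne') hq.pos.ne'⟩
  have hdvd : p ^ 2 ∣ q - 1 := (Nat.modEq_iff_dvd' hq.one_lt.le).mp hmod.symm
  have hp2 : 2 ≤ p := hp.two_le
  have hq2 : 2 ≤ q := hq.two_le
  have hpq : p ≠ q := by
    rintro rfl
    have h1 : p ^ 2 ≤ p - 1 := Nat.le_of_dvd (by omega) hdvd
    have h2 : p ≤ p ^ 2 := Nat.le_self_pow two_ne_zero p
    omega
  have hcop : Nat.Coprime (p ^ 2) q := ((Nat.coprime_primes hp hq).mpr hpq).pow_left 2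
  -- step 1 : CRT
  have e : (ZMod (p ^ 2 * q))ˣ ≃* (ZMod (p ^ 2))ˣ × (ZMod q)ˣ :=
    (Units.mapEquiv (ZMod.chineseRemainder hcop).toMulEquiv).trans MulEquiv.prodUnits
  rw [card_subgroups_congr e (p ^ 2)]
  -- step 2 : restrict to the (p^2)-torsion kernel
  set U1 := (ZMod (p ^ 2))ˣ
  set U2 := (ZMod q)ˣ
  set T' : Subgroup (U1 × U2) := (powMonoidHom (p ^ 2) : U1 × U2 →* U1 × U2).ker with hT'def
  have hall : ∀ H : Subgroup (U1 × U2), Nat.card H = p ^ 2 → H ≤ T' := by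
    intro H hH x hx
    rw [hT'def, MonoidHom.mem_ker, powMonoidHom_apply]
    have h0 := pow_card_eq_one' (G := H) (x := ⟨x, hx⟩)
    rw [hH] at h0
    simpa using congrArg Subtype.val h0
  rw [card_subgroups_subtype T' (p ^ 2) hall]
  -- step 3 : identify T' with ZMod p × ZMod (p^2)
  set T1 : Subgroup U1 := (powMonoidHom (p ^ 2) : U1 →* U1).ker with hT1def
  set T2 : Subgroup U2 := (powMonoidHom (p ^ 2) : U2 →* U2).ker with hT2def
  have hT' : T' = T1.prod T2 := ker_pow_prod (p ^ 2)
  -- cardinalities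
  have hcardU1 : Nat.card U1 = p * (p - 1) := by
    rw [Nat.card_eq_fintype_card, ZMod.card_units_eq_totient,
      Nat.totient_prime_pow hp (by norm_num)]
    norm_num
  have hcardU2 : Nat.card U2 = q - 1 := by
    rw [Nat.card_eq_fintype_card, ZMod.card_units_eq_totient, Nat.totient_prime hq]
  have hcardT2 : Nat.card T2 = p ^ 2 := by
    rw [hT2def, card_ker_pow_cyclic, hcardU2, Nat.gcd_eq_right hdvd]
  have hcardT1 : Nat.card T1 = p := by
    have hpg : IsPGroup p T1 := by
      intro g
      refine ⟨2, Subtype.ext ?_⟩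
      have hg : (g : U1) ^ p ^ 2 = 1 := g.2
      simpa using hg
    obtain ⟨n, hn⟩ := IsPGroup.iff_card.mp hpg
    have hpdvd : p ∣ Nat.card T1 := by
      obtain ⟨g, hg⟩ := exists_prime_orderOf_dvd_card' (G := U1) p
        (by rw [hcardU1]; exact dvd_mul_right p (p - 1))
      have hgp : g ^ p = 1 := by
        have h7 := pow_orderOf_eq_one g
        rwa [hg] at h7
      have hsq : g ^ p ^ 2 = (g ^ p) ^ p := by
        rw [← pow_mul, ← pow_two]
      have hgmem : g ∈ T1 := by
        rw [hT1def, MonoidHom.mem_ker, powMonoidHom_apply, hsq, hgp, one_pow]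
      have hordg : orderOf (⟨g, hgmem⟩ : T1) = p := by
        rw [← orderOf_submonoid (⟨g, hgmem⟩ : T1)]; exact hg
      have h8 := orderOf_dvd_natCard (⟨g, hgmem⟩ : T1)
      rwa [hordg] at h8
    have hdvd1 : p ^ n ∣ p * (p - 1) := by
      rw [← hn, ← hcardU1]; exact Subgroup.card_subgroup_dvd_card T1
    have hn1 : n = 1 := by
      rcases Nat.lt_or_ge n 1 with h | h
      · interval_cases n
        rw [pow_zero] at hn
        rw [hn] at hpdvd
        have := Nat.le_of_dvd one_pos hpdvd
        omega
      rcases Nat.lt_or_ge n 2 with h2 | h2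
      · omega
      · exfalso
        have hp2dvd : p ^ 2 ∣ p * (p - 1) := (pow_dvd_pow p h2).trans hdvd1
        rw [sq] at hp2dvd
        have : p ∣ p - 1 := (Nat.mul_dvd_mul_iff_left hp.pos).mp hp2dvd
        have := Nat.le_of_dvd (by omega) this
        omega
    rw [hn, hn1, pow_one]
  haveI : IsCyclic T1 := isCyclic_of_prime_card hcardT1
  -- the final equivalence
  have hcardM1 : Nat.card (Multiplicative (ZMod p)) = p := by
    rw [Nat.card_congr (Multiplicative.toAdd (α := ZMod p)), Nat.card_zmod]
  have hcardM2 : Nat.card (Multiplicative (ZMod (p ^ 2))) = p ^ 2 := by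
    rw [Nat.card_congr (Multiplicative.toAdd (α := ZMod (p ^ 2))), Nat.card_zmod]
  have e1 : T1 ≃* Multiplicative (ZMod p) :=
    mulEquivOfCyclicCardEq (by rw [hcardT1, hcardM1])
  have e2 : T2 ≃* Multiplicative (ZMod (p ^ 2)) :=
    mulEquivOfCyclicCardEq (by rw [hcardT2, hcardM2])
  have e3 : T' ≃* Multiplicative (ZMod p) × Multiplicative (ZMod (p ^ 2)) :=
    ((MulEquiv.subgroupCongr hT').trans (Subgroup.prodEquiv T1 T2)).trans
      (MulEquiv.prodCongr e1 e2)
  rw [card_subgroups_congr e3 (p ^ 2)]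
  exact model_count p hp
end
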